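/- arXiv:2212.13794 — 7 statements merged into one kernel-verified Lean document; each statement's English description precedes it below -/
import Mathlib

section
/- For integers n ≥ 0 and 0 ≤ k ≤ n, the number of Grassmannian permutations of {1,…,n} with exactly k fixed points equals 1 if k = n, equals 0 if k = n−1, and equals (k+1)·2^{n−k−2} if k ≤ n−2. -/
/-- A permutation of `{1,…,n}` (modeled as `Fin n`) is Grassmannian if it has
at most one descent, where a descent is a position `i` with `σ(i) > σ(i+1)`. -/
def IsGrassmannian {n : ℕ} (σ : Equiv.Perm (Fin n)) : Prop :=
  {i : ℕ | ∃ h : i + 1 < n, σ ⟨i + 1, h⟩ < σ ⟨i, Nat.lt_of_succ_lt h⟩}.Subsingleton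

open Finset Equiv

attribute [local instance] Classical.propDecidable

variable {n : ℕ}

private lemma cardsum (S : Finset (Fin n)) : n = S.card + Sᶜ.card := by
  rw [Finset.card_add_card_compl, Fintype.card_fin]

def permOfFinset (S : Finset (Fin n)) : Equiv.Perm (Fin n) :=
  ((finCongr (cardsum S)).trans finSumFinEquiv.symm).trans <|
    (Equiv.sumCongr (S.orderIsoOfFin rfl).toEquiv ((Sᶜ.orderIsoOfFin rfl).toEquiv)).trans <|
      (Equiv.sumCongr (Equiv.refl _) (Equiv.subtypeEquivRight (fun x => by simp))).trans <|
        Equiv.sumCompl (· ∈ S)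

lemma permOfFinset_apply_lt (S : Finset (Fin n)) (i : Fin n) (h : i.val < S.card) :
    permOfFinset S i = S.orderEmbOfFin rfl ⟨i.val, h⟩ := by
  have h1 : (finCongr (cardsum S)) i = Fin.castAdd Sᶜ.card ⟨i.val, h⟩ := by
    ext; simp
  simp only [permOfFinset, trans_apply]
  rw [h1, finSumFinEquiv_symm_apply_castAdd]
  simp [Finset.coe_orderIsoOfFin_apply]

lemma permOfFinset_apply_ge (S : Finset (Fin n)) (i : Fin n) (h : S.card ≤ i.val) :
    permOfFinset S i = Sᶜ.orderEmbOfFin rfl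
      ⟨i.val - S.card, by have := cardsum S; have := i.isLt; omega⟩ := by
  have hb : i.val - S.card < Sᶜ.card := by have := cardsum S; have := i.isLt; omega
  have h1 : (finCongr (cardsum S)) i = Fin.natAdd S.card ⟨i.val - S.card, hb⟩ := by
    ext; simp; omega
  simp only [permOfFinset, trans_apply]
  rw [h1, finSumFinEquiv_symm_apply_natAdd]
  simp [Finset.coe_orderIsoOfFin_apply]

lemma strictMono_val_add_le {m k : ℕ} {f : Fin k → Fin m} (hf : StrictMono f) :
    ∀ (t : ℕ) (i j : Fin k), j.val = i.val + t → (f i).val + t ≤ (f j).val := by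
  intro t
  induction t with
  | zero => intro i j hj; have : i = j := Fin.ext (by omega); simp [this]
  | succ t ih =>
    intro i j hj
    have hj' : i.val + t < k := by have := j.isLt; omega
    have h1 := ih i ⟨i.val + t, hj'⟩ rfl
    have h2 : f ⟨i.val + t, hj'⟩ < f j := hf (by simp [Fin.lt_def, hj])
    have := (Fin.lt_def).mp h2
    omega

lemma strictMono_val_le {m k : ℕ} {f : Fin k → Fin m} (hf : StrictMono f) (i : Fin k) :
    i.val ≤ (f i).val := by
  rcases Nat.eq_zero_or_pos k with h | h
  · omega
  · have := strictMono_val_add_le hf i.val ⟨0, h⟩ i (by simp)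
    omega

lemma strictMono_val_ge {m k : ℕ} {f : Fin k → Fin m} (hf : StrictMono f) (i : Fin k) :
    (f i).val ≤ m - k + i.val := by
  have hk : 0 < k := by have := i.isLt; omega
  have := strictMono_val_add_le hf (k - 1 - i.val) i ⟨k - 1, by omega⟩ (by simp; omega)
  have := (f ⟨k - 1, by omega⟩).isLt
  omega

lemma pof_mem (S : Finset (Fin n)) (i : Fin n) (h : i.val < S.card) :
    permOfFinset S i ∈ S := by
  rw [permOfFinset_apply_lt S i h]; exact Finset.orderEmbOfFin_mem S rfl _

lemma pof_not_mem (S : Finset (Fin n)) (i : Fin n) (h : S.card ≤ i.val) :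
    permOfFinset S i ∉ S := by
  rw [permOfFinset_apply_ge S i h]
  exact fun hmem => (Finset.mem_compl.mp (Finset.orderEmbOfFin_mem Sᶜ rfl _)) hmem

lemma pof_lt_lower (S : Finset (Fin n)) (i j : Fin n) (hij : i.val < j.val)
    (hj : j.val < S.card) : permOfFinset S i < permOfFinset S j := by
  rw [permOfFinset_apply_lt S i (by omega), permOfFinset_apply_lt S j hj]
  exact (S.orderEmbOfFin rfl).strictMono (by simp [Fin.lt_def, hij])

lemma pof_lt_upper (S : Finset (Fin n)) (i j : Fin n) (hi : S.card ≤ i.val)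
    (hij : i.val < j.val) : permOfFinset S i < permOfFinset S j := by
  rw [permOfFinset_apply_ge S i hi, permOfFinset_apply_ge S j (by omega)]
  exact (Sᶜ.orderEmbOfFin rfl).strictMono (by simp [Fin.lt_def]; omega)

lemma pof_ge (S : Finset (Fin n)) (i : Fin n) (h : i.val < S.card) :
    i.val ≤ (permOfFinset S i).val := by
  rw [permOfFinset_apply_lt S i h]
  have := strictMono_val_le (S.orderEmbOfFin rfl).strictMono ⟨i.val, h⟩
  simpa using this

lemma pof_le (S : Finset (Fin n)) (i : Fin n) (h : S.card ≤ i.val) :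
    (permOfFinset S i).val ≤ i.val := by
  rw [permOfFinset_apply_ge S i h]
  have hb : i.val - S.card < Sᶜ.card := by have := cardsum S; have := i.isLt; omega
  have h2 := strictMono_val_ge (Sᶜ.orderEmbOfFin rfl).strictMono ⟨i.val - S.card, hb⟩
  have := cardsum S
  show ((Sᶜ.orderEmbOfFin rfl) ⟨i.val - S.card, hb⟩).val ≤ i.val
  have h3 : ((⟨i.val - S.card, hb⟩ : Fin Sᶜ.card)).val = i.val - S.card := rfl
  omega

lemma descent_eq (S : Finset (Fin n)) {i : ℕ}
    (hi : i ∈ {i : ℕ | ∃ h : i + 1 < n, permOfFinset S ⟨i + 1, h⟩ <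
      permOfFinset S ⟨i, Nat.lt_of_succ_lt h⟩}) : i + 1 = S.card := by
  obtain ⟨h, hlt⟩ := hi
  by_contra hne
  rcases lt_or_gt_of_ne hne with hc | hc
  · exact absurd (pof_lt_lower S ⟨i, _⟩ ⟨i + 1, h⟩ (by simp) hc) (by simpa using hlt.le)
  · exact absurd (pof_lt_upper S ⟨i, _⟩ ⟨i + 1, h⟩ (by simpa using Nat.lt_succ_iff.mp hc) (by simp))
      (by simpa using hlt.le)

lemma grass_pof (S : Finset (Fin n)) : IsGrassmannian (permOfFinset S) := by
  intro i hi j hj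
  have := descent_eq S hi
  have := descent_eq S hj
  omega

lemma pof_fixed_iff (S : Finset (Fin n)) (i : Fin n) :
    permOfFinset S i = i ↔ (∀ j : Fin n, j ≤ i → j ∈ S) ∨ (∀ j ∈ S, j < i) := by
  constructor
  · intro hfix
    rcases lt_or_ge i.val S.card with hid | hid
    · left
      have key : ∀ t (j : Fin n), j.val + t = i.val → permOfFinset S j = j := by
        intro t
        induction t with
        | zero => intro j hj; have hji : j = i := Fin.ext (by omega); rwa [hji]
        | succ t ih =>
          intro j hj
          have hj1 : j.val + 1 < n := by have := i.isLt; omega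
          have h1 : permOfFinset S ⟨j.val + 1, hj1⟩ = ⟨j.val + 1, hj1⟩ := ih _ (by simp; omega)
          have h2 : permOfFinset S j < permOfFinset S ⟨j.val + 1, hj1⟩ :=
            pof_lt_lower S j ⟨j.val + 1, hj1⟩ (by simp) (by simp; omega)
          have h3 := pof_ge S j (by omega)
          rw [h1] at h2
          have h2' := (Fin.lt_def).mp h2
          exact Fin.ext (by simp at h2'; omega)
      intro j hji
      have hfj := key (i.val - j.val) j (by have := Fin.le_def.mp hji; omega)
      have hjd : j.val < S.card := by have := Fin.le_def.mp hji; omega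
      have hm := pof_mem S j hjd
      rwa [hfj] at hm
    · right
      have key : ∀ t (j : Fin n), i.val + t = j.val → permOfFinset S j = j := by
        intro t
        induction t with
        | zero => intro j hj; have hji : j = i := Fin.ext (by omega); rwa [hji]
        | succ t ih =>
          intro j hj
          have hjm : j.val - 1 < n := by omega
          have h1 : permOfFinset S ⟨j.val - 1, hjm⟩ = ⟨j.val - 1, hjm⟩ := ih _ (by simp; omega)
          have h2 : permOfFinset S ⟨j.val - 1, hjm⟩ < permOfFinset S j :=
            pof_lt_upper S ⟨j.val - 1, hjm⟩ j (by simp; omega) (by simp; omega)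
          have h3 := pof_le S j (by omega)
          rw [h1] at h2
          have h2' := (Fin.lt_def).mp h2
          exact Fin.ext (by simp at h2'; omega)
      intro s hs
      rw [Fin.lt_def]
      by_contra hsi
      push_neg at hsi
      have hfs : permOfFinset S s = s := key (s.val - i.val) s (by omega)
      have hnm : permOfFinset S s ∉ S := pof_not_mem S s (by omega)
      rw [hfs] at hnm
      exact hnm hs
  · intro hcase
    rcases hcase with hL | hR
    · have hid : i.val < S.card := by
        have hsub : Finset.Iic i ⊆ S := fun j hj => hL j (Finset.mem_Iic.mp hj)
        have := Finset.card_le_card hsub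
        rwa [Fin.card_Iic i] at this
      have main : ∀ m (h : m < n), m ≤ i.val → permOfFinset S ⟨m, h⟩ = ⟨m, h⟩ := by
        intro m
        induction m using Nat.strong_induction_on with
        | _ m ih =>
        intro h hmi
        have hmem : (⟨m, h⟩ : Fin n) ∈ S := hL _ (by rw [Fin.le_def]; exact hmi)
        have hσt : permOfFinset S ((permOfFinset S).symm ⟨m, h⟩) = ⟨m, h⟩ :=
          Equiv.apply_symm_apply _ _
        set t := (permOfFinset S).symm ⟨m, h⟩ with ht
        have htd : t.val < S.card := by
          by_contra hc
          push_neg at hc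
          exact (pof_not_mem S t hc) (hσt ▸ hmem)
        rcases lt_trichotomy t.val m with hc | hc | hc
        · have h5 : permOfFinset S t = t := by
            have := ih t.val hc t.isLt (by omega)
            simpa using this
          rw [h5] at hσt
          have := congrArg Fin.val hσt
          simp at this
          omega
        · have he : t = (⟨m, h⟩ : Fin n) := Fin.ext hc
          rw [← he, hσt, he]
        · have h5 := pof_ge S t htd
          rw [hσt] at h5
          simp at h5
          omega
      have := main i.val i.isLt le_rfl
      simpa using this
    · have hid : S.card ≤ i.val := by
        have hsub : S ⊆ Finset.Iio i := fun j hj => Finset.mem_Iio.mpr (hR j hj)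
        have := Finset.card_le_card hsub
        rwa [Fin.card_Iio i] at this
      have main : ∀ t (m : ℕ) (h : m < n), i.val ≤ m → t = n - 1 - m →
          permOfFinset S ⟨m, h⟩ = ⟨m, h⟩ := by
        intro t
        induction t using Nat.strong_induction_on with
        | _ t ih =>
        intro m h him htm
        have hmem : (⟨m, h⟩ : Fin n) ∉ S := by
          intro hc
          have := Fin.lt_def.mp (hR _ hc)
          simp at this
          omega
        have hσt : permOfFinset S ((permOfFinset S).symm ⟨m, h⟩) = ⟨m, h⟩ :=
          Equiv.apply_symm_apply _ _
        set t' := (permOfFinset S).symm ⟨m, h⟩ with ht'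
        have htd : S.card ≤ t'.val := by
          by_contra hc
          push_neg at hc
          exact hmem (hσt ▸ pof_mem S t' hc)
        rcases lt_trichotomy t'.val m with hc | hc | hc
        · have h5 := pof_le S t' htd
          rw [hσt] at h5
          simp at h5
          omega
        · have he : t' = (⟨m, h⟩ : Fin n) := Fin.ext hc
          rw [← he, hσt, he]
        · have h5 : permOfFinset S t' = t' := by
            have := ih (n - 1 - t'.val) (by have := t'.isLt; omega) t'.val t'.isLt (by omega) rfl
            simpa using this
          rw [h5] at hσt
          have := congrArg Fin.val hσt
          simp at this
          omega
      have := main (n - 1 - i.val) i.val i.isLt le_rfl rfl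
      simpa using this

lemma chain_lt (σ : Equiv.Perm (Fin n)) (lo hi : ℕ)
    (hadj : ∀ j, lo ≤ j → j + 1 ≤ hi → ∀ (hj : j + 1 < n),
      σ ⟨j, Nat.lt_of_succ_lt hj⟩ < σ ⟨j + 1, hj⟩) :
    ∀ (t i : ℕ) (hi' : i < n) (hj' : i + t + 1 < n), lo ≤ i → i + t + 1 ≤ hi →
      σ ⟨i, hi'⟩ < σ ⟨i + t + 1, hj'⟩ := by
  intro t
  induction t with
  | zero => intro i hi' hj' hl hr; exact hadj i hl (by omega) (by omega)
  | succ t ih =>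
    intro i hi' hj' hl hr
    have h1 := ih i hi' (by omega) hl (by omega)
    have h2 : σ ⟨i + t + 1, by omega⟩ < σ ⟨i + (t + 1) + 1, hj'⟩ :=
      hadj (i + t + 1) (by omega) (by omega) (by omega)
    exact h1.trans h2

lemma eq_pof (σ : Equiv.Perm (Fin n)) (d : ℕ) (hd : d < n)
    (hmono : ∀ j (hj : j + 1 < n), j + 1 ≠ d →
      σ ⟨j, Nat.lt_of_succ_lt hj⟩ < σ ⟨j + 1, hj⟩) :
    σ = permOfFinset (Finset.image σ (Finset.Iio ⟨d, hd⟩)) := by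
  set S := Finset.image σ (Finset.Iio ⟨d, hd⟩) with hS
  have hcard : S.card = d := by
    rw [hS, Finset.card_image_of_injective _ σ.injective, Fin.card_Iio]
  have hcn : S.card < n := by rw [hcard]; exact hd
  have mono1 : ∀ i j : Fin n, i.val < j.val → j.val < d → σ i < σ j := by
    intro i j hij hjd
    have key := chain_lt σ 0 (d - 1) (fun j hl hr hj => hmono j hj (by omega))
      (j.val - i.val - 1) i.val i.isLt (by omega) (by omega) (by omega)
    have he1 : (⟨i.val, i.isLt⟩ : Fin n) = i := Fin.ext rfl
    have he2 : (⟨i.val + (j.val - i.val - 1) + 1, by omega⟩ : Fin n) = j :=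
      Fin.ext (by simp only [Fin.val_mk]; omega)
    rwa [he1, he2] at key
  have mono2 : ∀ i j : Fin n, d ≤ i.val → i.val < j.val → σ i < σ j := by
    intro i j hdi hij
    have key := chain_lt σ d n (fun j hl hr hj => hmono j hj (by omega))
      (j.val - i.val - 1) i.val i.isLt (by omega) (by omega) (by omega)
    have he1 : (⟨i.val, i.isLt⟩ : Fin n) = i := Fin.ext rfl
    have he2 : (⟨i.val + (j.val - i.val - 1) + 1, by omega⟩ : Fin n) = j :=
      Fin.ext (by simp only [Fin.val_mk]; omega)
    rwa [he1, he2] at key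
  have hf : (fun x : Fin S.card => σ ⟨x.val, lt_trans x.isLt hcn⟩) =
      S.orderEmbOfFin rfl := by
    apply Finset.orderEmbOfFin_unique
    · intro x
      exact Finset.mem_image_of_mem σ (Finset.mem_Iio.mpr
        (show (⟨x.val, lt_trans x.isLt hcn⟩ : Fin n).val < d from hcard ▸ x.isLt))
    · intro x y hxy
      exact mono1 _ _ hxy (hcard ▸ y.isLt)
  have hg : (fun x : Fin Sᶜ.card =>
        σ ⟨d + x.val, by have := cardsum S; have := x.isLt; omega⟩) =
      Sᶜ.orderEmbOfFin rfl := by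
    apply Finset.orderEmbOfFin_unique
    · intro x
      rw [Finset.mem_compl]
      intro hc
      obtain ⟨j, hj, hje⟩ := Finset.mem_image.mp hc
      have hv : j.val = d + x.val := congrArg Fin.val (σ.injective hje)
      have hj2 : j < (⟨d, hd⟩ : Fin n) := Finset.mem_Iio.mp hj
      have hjd : j.val < d := hj2
      omega

    · intro x y hxy
      exact mono2 _ _ (Nat.le_add_right d x.val) (Nat.add_lt_add_left hxy d)
  apply Equiv.ext
  intro i
  rcases lt_or_ge i.val S.card with hi | hi
  · rw [permOfFinset_apply_lt S i hi, ← hf]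
  · rw [permOfFinset_apply_ge S i hi, ← hg]
    exact congrArg σ (Fin.ext (show i.val = d + (i.val - S.card) by omega))

lemma grass_exists (σ : Equiv.Perm (Fin n)) (h : IsGrassmannian σ) :
    ∃ S : Finset (Fin n), σ = permOfFinset S := by
  by_cases hD : ∃ i : ℕ, ∃ hi : i + 1 < n, σ ⟨i + 1, hi⟩ < σ ⟨i, Nat.lt_of_succ_lt hi⟩
  · obtain ⟨p, hp1, hp2⟩ := hD
    refine ⟨_, eq_pof σ (p + 1) hp1 ?_⟩
    intro j hj hne
    rcases lt_trichotomy (σ ⟨j, Nat.lt_of_succ_lt hj⟩) (σ ⟨j + 1, hj⟩) with h1 | h1 | h1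
    · exact h1
    · exact absurd (congrArg Fin.val (σ.injective h1)) (by simp)
    · have hjp : j = p := h (Set.mem_setOf.mpr ⟨hj, h1⟩) (Set.mem_setOf.mpr ⟨hp1, hp2⟩)
      omega
  · push_neg at hD
    rcases Nat.eq_zero_or_pos n with hn | hn
    · subst hn
      exact ⟨∅, Equiv.ext fun i => absurd i.isLt (by omega)⟩
    · refine ⟨_, eq_pof σ 0 hn ?_⟩
      intro j hj _
      rcases lt_trichotomy (σ ⟨j, Nat.lt_of_succ_lt hj⟩) (σ ⟨j + 1, hj⟩) with h1 | h1 | h1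
      · exact h1
      · exact absurd (congrArg Fin.val (σ.injective h1)) (by simp)
      · exact absurd h1 (not_lt.mpr (hD j hj))

def Good (S : Finset (Fin n)) : Prop := ∃ x y : Fin n, x ∉ S ∧ y ∈ S ∧ x < y

lemma pof_eq_one_of_not_good (S : Finset (Fin n)) (h : ¬ Good S) : permOfFinset S = 1 := by
  rw [Good] at h
  push_neg at h
  apply Equiv.ext
  intro i
  show permOfFinset S i = i
  rw [pof_fixed_iff]
  by_cases hi : i ∈ S
  · left
    intro j hji
    by_contra hj
    have hle := h j i hj hi
    have hji2 : j = i := le_antisymm hji hle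
    exact hj (hji2 ▸ hi)
  · right
    intro j hjS
    exact lt_of_le_of_ne (h i j hi hjS) (fun he => hi (he ▸ hjS))

lemma good_card_pos (S : Finset (Fin n)) (hg : Good S) : 0 < S.card := by
  obtain ⟨x, y, hx, hy, hxy⟩ := hg
  exact Finset.card_pos.mpr ⟨y, hy⟩

lemma good_card_lt (S : Finset (Fin n)) (hg : Good S) : S.card < n := by
  obtain ⟨x, y, hx, hy, hxy⟩ := hg
  by_contra hc
  push_neg at hc
  have hle : S.card ≤ n := by simpa using S.card_le_univ
  have hcard : S.card = n := le_antisymm hle hc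
  have hu := Finset.eq_univ_of_card S (by rw [hcard, Fintype.card_fin])
  exact hx (hu ▸ Finset.mem_univ x)

lemma pof_descent_of_good (S : Finset (Fin n)) (hg : Good S) :
    ∃ hlt : (S.card - 1) + 1 < n,
      permOfFinset S ⟨S.card - 1 + 1, hlt⟩ < permOfFinset S ⟨S.card - 1, Nat.lt_of_succ_lt hlt⟩ := by
  have h0 := good_card_pos S hg
  have h1 := good_card_lt S hg
  have hlt : (S.card - 1) + 1 < n := by omega
  refine ⟨hlt, ?_⟩
  obtain ⟨x, y, hx, hy, hxy⟩ := hg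
  have hcc : 0 < Sᶜ.card := by have := cardsum S; omega
  have e1 : permOfFinset S ⟨S.card - 1 + 1, hlt⟩ = Sᶜ.min' (Finset.card_pos.mp hcc) := by
    rw [permOfFinset_apply_ge S _ (show S.card ≤ S.card - 1 + 1 by omega)]
    convert Finset.orderEmbOfFin_zero (s := Sᶜ) rfl hcc using 2
    exact Fin.ext (show S.card - 1 + 1 - S.card = 0 by omega)
  have e2 : permOfFinset S ⟨S.card - 1, Nat.lt_of_succ_lt hlt⟩ =
      S.max' (Finset.card_pos.mp h0) := by
    rw [permOfFinset_apply_lt S _ (show (S.card - 1 : ℕ) < S.card by omega)]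
    convert Finset.orderEmbOfFin_last (s := S) rfl h0 using 2
  rw [e1, e2]
  calc Sᶜ.min' _ ≤ x := Finset.min'_le _ x (Finset.mem_compl.mpr hx)
    _ < y := hxy
    _ ≤ S.max' _ := Finset.le_max' _ y hy

lemma pof_image (S : Finset (Fin n)) (h : S.card < n) :
    Finset.image (permOfFinset S) (Finset.Iio ⟨S.card, h⟩) = S := by
  apply Finset.eq_of_subset_of_card_le
  · intro y hy
    obtain ⟨j, hj, hje⟩ := Finset.mem_image.mp hy
    have hjv : j < (⟨S.card, h⟩ : Fin n) := Finset.mem_Iio.mp hj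
    exact hje ▸ pof_mem S j hjv
  · rw [Finset.card_image_of_injective _ (permOfFinset S).injective, Fin.card_Iio]

lemma pof_inj_good (S S' : Finset (Fin n)) (hS : Good S) (hS' : Good S')
    (hEq : permOfFinset S = permOfFinset S') : S = S' := by
  obtain ⟨hlt, hdes⟩ := pof_descent_of_good S hS
  have h0 := good_card_pos S hS
  have hc : (S.card - 1) + 1 = S'.card :=
    descent_eq S' ⟨hlt, by rw [← hEq]; exact hdes⟩
  have hcards : S.card = S'.card := by omega
  have h1 := good_card_lt S hS
  have h1' : S'.card < n := hcards ▸ h1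
  calc S = Finset.image (permOfFinset S) (Finset.Iio ⟨S.card, h1⟩) := (pof_image S h1).symm
    _ = Finset.image (permOfFinset S') (Finset.Iio ⟨S'.card, h1'⟩) := by
        rw [hEq]; congr 1; exact congrArg _ (Fin.ext hcards)
    _ = S' := pof_image S' h1'

lemma filter_lt_card (m : ℕ) (hm : m < n) :
    (Finset.univ.filter (fun i : Fin n => i.val < m)).card = m := by
  have he : Finset.univ.filter (fun i : Fin n => i.val < m) = Finset.Iio ⟨m, hm⟩ := by
    ext i
    simp [Finset.mem_Iio, Fin.lt_def]
  rw [he, Fin.card_Iio]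

lemma filter_gt_card (m : ℕ) (hm : m < n) :
    (Finset.univ.filter (fun i : Fin n => m < i.val)).card = n - 1 - m := by
  have he : Finset.univ.filter (fun i : Fin n => m < i.val) = Finset.Ioi ⟨m, hm⟩ := by
    ext i
    simp [Finset.mem_Ioi, Fin.lt_def]
  rw [he, Fin.card_Ioi]

lemma fixed_card (S : Finset (Fin n)) (a M : ℕ) (haM : a < M) (hM : M < n)
    (h1 : ∀ i : Fin n, i.val < a → i ∈ S) (h2 : ∀ i : Fin n, i.val = a → i ∉ S)
    (h3 : ∀ i : Fin n, i.val = M → i ∈ S) (h4 : ∀ i : Fin n, M < i.val → i ∉ S) :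
    (Finset.univ.filter (fun i => permOfFinset S i = i)).card = a + (n - 1 - M) := by
  have hform : ∀ i : Fin n, (permOfFinset S i = i) ↔ (i.val < a ∨ M < i.val) := by
    intro i
    rw [pof_fixed_iff]
    constructor
    · rintro (hL | hR)
      · left
        by_contra hc
        push_neg at hc
        exact h2 ⟨a, by omega⟩ rfl (hL ⟨a, by omega⟩ (by rw [Fin.le_def]; exact hc))
      · right
        have := hR ⟨M, hM⟩ (h3 ⟨M, hM⟩ rfl)
        rw [Fin.lt_def] at this
        exact this
    · rintro (hc | hc)
      · left
        intro j hji
        exact h1 j (by have := Fin.le_def.mp hji; omega)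
      · right
        intro j hjS
        rw [Fin.lt_def]
        by_contra hij
        push_neg at hij
        exact h4 j (by omega) hjS
  have hsplit : Finset.univ.filter (fun i => permOfFinset S i = i) =
      Finset.univ.filter (fun i : Fin n => i.val < a) ∪
      Finset.univ.filter (fun i : Fin n => M < i.val) := by
    ext i
    simp only [Finset.mem_filter, Finset.mem_union, Finset.mem_univ, true_and]
    exact (hform i).trans (or_congr Iff.rfl Iff.rfl)
  rw [hsplit, Finset.card_union_of_disjoint, filter_lt_card a (by omega), filter_gt_card M hM]
  rw [Finset.disjoint_filter]
  intro i _ hia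
  omega

def Ca (k a : ℕ) : Finset (Finset (Fin n)) := Finset.univ.filter (fun S =>
  (∀ i : Fin n, i.val < a → i ∈ S) ∧ (∀ i : Fin n, i.val = a → i ∉ S) ∧
  (∀ i : Fin n, i.val = n - k - 1 + a → i ∈ S) ∧ (∀ i : Fin n, n - k - 1 + a < i.val → i ∉ S))

lemma Ca_card (k a : ℕ) (ha : a ≤ k) (hkn : k + 2 ≤ n) :
    (Ca (n := n) k a).card = 2 ^ (n - k - 2) := by
  set M := n - k - 1 + a with hM
  have haM : a < M := by omega
  have hMn : M < n := by omega
  have han : a < n := by omega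
  set lo : Fin n := ⟨a, han⟩ with hlo
  set pt : Fin n := ⟨M, hMn⟩ with hpt
  have hcard : (Ca (n := n) k a).card = (Finset.Ioo lo pt).powerset.card := by
    apply Finset.card_bij' (fun S _ => S ∩ Finset.Ioo lo pt)
      (fun U _ => (Finset.Iio lo ∪ U) ∪ {pt})
    · intro S _
      exact Finset.mem_powerset.mpr Finset.inter_subset_right
    · intro U hU
      have hUsub : U ⊆ Finset.Ioo lo pt := Finset.mem_powerset.mp hU
      rw [Ca, Finset.mem_filter]
      refine ⟨Finset.mem_univ _, ?_, ?_, ?_, ?_⟩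
      · intro i hi
        exact Finset.mem_union_left _ (Finset.mem_union_left _
          (Finset.mem_Iio.mpr (show i < lo from hi)))
      · intro i hi
        intro hc
        rcases Finset.mem_union.mp hc with hc | hc
        · rcases Finset.mem_union.mp hc with hc | hc
          · have : i < lo := Finset.mem_Iio.mp hc
            have : i.val < a := this
            omega
          · have := Finset.mem_Ioo.mp (hUsub hc)
            have h5 : lo < i := this.1
            have : a < i.val := h5
            omega
        · have he : i = pt := Finset.mem_singleton.mp hc
          have : i.val = M := by rw [he]
          omega
      · intro i hi
        exact Finset.mem_union_right _ (Finset.mem_singleton.mpr (Fin.ext hi))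
      · intro i hi
        intro hc
        rcases Finset.mem_union.mp hc with hc | hc
        · rcases Finset.mem_union.mp hc with hc | hc
          · have h6 : i < lo := Finset.mem_Iio.mp hc
            have : i.val < a := h6
            omega
          · have := Finset.mem_Ioo.mp (hUsub hc)
            have h5 : i < pt := this.2
            have : i.val < M := h5
            omega
        · have he : i = pt := Finset.mem_singleton.mp hc
          have : i.val = M := by rw [he]
          omega
    · intro S hS
      rw [Ca, Finset.mem_filter] at hS
      obtain ⟨-, c1, c2, c3, c4⟩ := hS
      ext i
      simp only [Finset.mem_union, Finset.mem_inter, Finset.mem_Iio, Finset.mem_Ioo,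
        Finset.mem_singleton]
      constructor
      · rintro ((hc | ⟨hc, -⟩) | hc)
        · exact c1 i (show i.val < a from hc)
        · exact hc
        · exact hc ▸ c3 pt rfl
      · intro hiS
        rcases lt_trichotomy i.val a with hc | hc | hc
        · exact Or.inl (Or.inl (show i < lo from hc))
        · exact absurd hiS (c2 i hc)
        · rcases lt_trichotomy i.val M with hd | hd | hd
          · exact Or.inl (Or.inr ⟨hiS, show lo < i from hc, show i < pt from hd⟩)
          · exact Or.inr (Fin.ext hd)
          · exact absurd hiS (c4 i hd)
    · intro U hU
      have hUsub : U ⊆ Finset.Ioo lo pt := Finset.mem_powerset.mp hU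
      ext i
      simp only [Finset.mem_inter, Finset.mem_union, Finset.mem_Iio, Finset.mem_Ioo,
        Finset.mem_singleton]
      constructor
      · rintro ⟨(hc | hc) | hc, hlo2, hhi2⟩
        · exact absurd hlo2 (asymm (show i < lo from hc))
        · exact hc
        · rw [hc] at hhi2
          exact absurd hhi2 (lt_irrefl pt)
      · intro hiU
        have := Finset.mem_Ioo.mp (hUsub hiU)
        exact ⟨Or.inl (Or.inr hiU), this.1, this.2⟩
  rw [hcard, Finset.card_powerset, Fin.card_Ioo]
  congr 1
  show M - a - 1 = n - k - 2
  omega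

lemma count_main (k : ℕ) (hkn : k + 2 ≤ n) :
    (Finset.univ.filter (fun S : Finset (Fin n) => Good S ∧
      (Finset.univ.filter (fun i => permOfFinset S i = i)).card = k)).card
      = (k + 1) * 2 ^ (n - k - 2) := by
  have hsplit : Finset.univ.filter (fun S : Finset (Fin n) => Good S ∧
      (Finset.univ.filter (fun i => permOfFinset S i = i)).card = k)
      = (Finset.range (k + 1)).biUnion (fun a => Ca (n := n) k a) := by
    ext S
    simp only [Finset.mem_filter, Finset.mem_biUnion, Finset.mem_range, Finset.mem_univ, true_and]
    constructor
    · rintro ⟨hg, hfc⟩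
      have hclt := good_card_lt S hg
      have hc0 := good_card_pos S hg
      have hSne : S.Nonempty := Finset.card_pos.mp hc0
      have hScne : Sᶜ.Nonempty := Finset.card_pos.mp (by have := cardsum S; omega)
      set a := (Sᶜ.min' hScne).val with hav
      set M := (S.max' hSne).val with hMv
      have h1 : ∀ i : Fin n, i.val < a → i ∈ S := by
        intro i hi
        by_contra hc
        have := Finset.min'_le Sᶜ i (Finset.mem_compl.mpr hc)
        rw [Fin.le_def] at this
        omega
      have h2 : ∀ i : Fin n, i.val = a → i ∉ S := by
        intro i hi
        have : i = Sᶜ.min' hScne := Fin.ext hi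
        rw [this]
        exact Finset.mem_compl.mp (Finset.min'_mem _ _)
      have h3 : ∀ i : Fin n, i.val = M → i ∈ S := by
        intro i hi
        have : i = S.max' hSne := Fin.ext hi
        rw [this]
        exact Finset.max'_mem _ _
      have h4 : ∀ i : Fin n, M < i.val → i ∉ S := by
        intro i hi hc
        have := Finset.le_max' S i hc
        rw [Fin.le_def] at this
        omega
      have haM : a < M := by
        obtain ⟨x, y, hx, hy, hxy⟩ := hg
        have hax := Finset.min'_le Sᶜ x (Finset.mem_compl.mpr hx)
        have hyM := Finset.le_max' S y hy
        rw [Fin.le_def] at hax hyM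
        rw [Fin.lt_def] at hxy
        omega
      have hMn : M < n := (S.max' hSne).isLt
      have hfc2 := fixed_card S a M haM hMn h1 h2 h3 h4
      rw [hfc] at hfc2
      have han : a < n := by omega
      have hak : a ≤ k := by omega
      have hMeq : M = n - k - 1 + a := by omega
      refine ⟨a, by omega, ?_⟩
      rw [Ca, Finset.mem_filter]
      exact ⟨Finset.mem_univ _, h1, h2, fun i hi => h3 i (by omega), fun i hi => h4 i (by omega)⟩
    · rintro ⟨a, ha, hCa⟩
      rw [Ca, Finset.mem_filter] at hCa
      obtain ⟨-, h1, h2, h3, h4⟩ := hCa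
      set M := n - k - 1 + a with hMv
      have haM : a < M := by omega
      have hMn : M < n := by omega
      have hg : Good S := ⟨⟨a, by omega⟩, ⟨M, hMn⟩, h2 _ rfl, h3 _ rfl,
        show a < M from haM⟩
      refine ⟨hg, ?_⟩
      rw [fixed_card S a M haM hMn h1 h2 h3 h4]
      omega
  rw [hsplit, Finset.card_biUnion]
  · rw [Finset.sum_congr rfl (fun a ha => Ca_card k a (by simpa using Nat.lt_succ_iff.mp (Finset.mem_range.mp ha)) hkn)]
    rw [Finset.sum_const, Finset.card_range, smul_eq_mul]
  · intro a ha b hb hab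
    rw [Function.onFun, Finset.disjoint_left]
    intro S hSa hSb
    rw [Ca, Finset.mem_filter] at hSa hSb
    obtain ⟨-, a1, a2, -, -⟩ := hSa
    obtain ⟨-, b1, b2, -, -⟩ := hSb
    rcases lt_trichotomy a b with hc | hc | hc
    · have han : a < n := by have := Finset.mem_range.mp ha; omega
      exact a2 ⟨a, han⟩ rfl (b1 ⟨a, han⟩ hc)
    · exact hab hc
    · have hbn : b < n := by have := Finset.mem_range.mp hb; omega
      exact b2 ⟨b, hbn⟩ rfl (a1 ⟨b, hbn⟩ hc)

lemma ncard_fixed_conv (τ : Equiv.Perm (Fin n)) :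
    {i : Fin n | τ i = i}.ncard = (Finset.univ.filter (fun i => τ i = i)).card := by
  rw [← Set.ncard_coe_finset]
  congr 1
  ext i
  simp

/-- The number of Grassmannian permutations of `{1,…,n}` with exactly `k` fixed
points equals `1` if `k = n`, `0` if `k = n−1`, and `(k+1)·2^{n−k−2}` otherwise. -/
theorem grassmannian_fixed_points_count (n k : ℕ) (hk : k ≤ n) :
    {σ : Equiv.Perm (Fin n) | IsGrassmannian σ ∧ {i : Fin n | σ i = i}.ncard = k}.ncard =
      if k = n then 1
      else if k = n - 1 then 0
      else (k + 1) * 2 ^ (n - k - 2) := by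
  by_cases hkn : k = n
  · rw [if_pos hkn]
    have hset : {σ : Equiv.Perm (Fin n) | IsGrassmannian σ ∧ {i : Fin n | σ i = i}.ncard = k}
        = {1} := by
      ext σ
      simp only [Set.mem_setOf_eq, Set.mem_singleton_iff]
      constructor
      · rintro ⟨-, hfix⟩
        have huniv : {i : Fin n | σ i = i} = Set.univ := by
          apply Set.eq_of_subset_of_ncard_le (Set.subset_univ _)
          rw [Set.ncard_univ, Nat.card_eq_fintype_card, Fintype.card_fin, hfix, hkn]
        apply Equiv.ext
        intro i
        have : i ∈ {i : Fin n | σ i = i} := huniv ▸ Set.mem_univ i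
        exact this
      · rintro rfl
        constructor
        · intro i hi j hj
          obtain ⟨h, hlt⟩ := hi
          have := Fin.lt_def.mp hlt
          simp at this
        · have : {i : Fin n | (1 : Equiv.Perm (Fin n)) i = i} = Set.univ := by ext i; simp
          rw [this, Set.ncard_univ, Nat.card_eq_fintype_card, Fintype.card_fin, hkn]
    rw [hset, Set.ncard_singleton]
  · rw [if_neg hkn]
    by_cases hk1 : k = n - 1
    · rw [if_pos hk1]
      have hset : {σ : Equiv.Perm (Fin n) | IsGrassmannian σ ∧ {i : Fin n | σ i = i}.ncard = k}
          = ∅ := by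
        rw [Set.eq_empty_iff_forall_notMem]
        rintro σ ⟨-, hfix⟩
        rw [ncard_fixed_conv σ] at hfix
        set F := Finset.univ.filter (fun i => σ i = i) with hF
        have hcc : (Fᶜ).card = 1 := by
          rw [Finset.card_compl, hfix, Fintype.card_fin]
          omega
        obtain ⟨x, hx⟩ := Finset.card_eq_one.mp hcc
        have hxm : x ∈ Fᶜ := hx ▸ Finset.mem_singleton_self x
        have hxf : σ x ≠ x := by
          intro hc
          rw [Finset.mem_compl, hF, Finset.mem_filter] at hxm
          exact hxm ⟨Finset.mem_univ x, hc⟩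
        have hym : σ x ∈ Fᶜ := by
          rw [Finset.mem_compl, hF, Finset.mem_filter]
          rintro ⟨-, hyf⟩
          exact hxf (σ.injective hyf)
        rw [hx, Finset.mem_singleton] at hym
        exact hxf hym
      rw [hset, Set.ncard_empty]
    · rw [if_neg hk1]
      have hk2 : k + 2 ≤ n := by omega
      set B := Finset.univ.filter (fun S : Finset (Fin n) => Good S ∧
        (Finset.univ.filter (fun i => permOfFinset S i = i)).card = k) with hB
      have himg : {σ : Equiv.Perm (Fin n) | IsGrassmannian σ ∧ {i : Fin n | σ i = i}.ncard = k}
          = permOfFinset '' ↑B := by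
        ext σ
        simp only [Set.mem_setOf_eq, Set.mem_image, Finset.mem_coe]
        constructor
        · rintro ⟨hgr, hfix⟩
          obtain ⟨S, rfl⟩ := grass_exists σ hgr
          refine ⟨S, ?_, rfl⟩
          have hgood : Good S := by
            by_contra hng
            rw [pof_eq_one_of_not_good S hng] at hfix
            have he1 : {i : Fin n | (1 : Equiv.Perm (Fin n)) i = i} = Set.univ := by
              ext i; simp
            rw [he1, Set.ncard_univ, Nat.card_eq_fintype_card, Fintype.card_fin] at hfix
            omega
          rw [hB, Finset.mem_filter]
          refine ⟨Finset.mem_univ _, hgood, ?_⟩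
          rw [← ncard_fixed_conv (permOfFinset S)]
          exact hfix
        · rintro ⟨S, hSB, rfl⟩
          rw [hB, Finset.mem_filter] at hSB
          exact ⟨grass_pof S, by rw [ncard_fixed_conv]; exact hSB.2.2⟩
      rw [himg, Set.ncard_image_of_injOn, Set.ncard_coe_finset]
      · rw [hB]
        exact count_main k hk2
      · intro S hS S' hS' hEq
        rw [Finset.mem_coe, hB, Finset.mem_filter] at hS hS'
        exact pof_inj_good S S' hS.2.1 hS'.2.1 hEq
end

section
/- For every binary word w of length k ≥ 1 and every n ≥ 0, the number of binary words of length n that avoid w equals Σ_{j=0}^{k−1} binom(n, j). In particular this count is independent of the choice of w. -/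
/-!
Split a word of length `n + 1` avoiding `a :: w` by its first letter: if that letter is `a`, the
tail must avoid `w`; if it is `!a`, the tail must still avoid `a :: w`. Hence the count
`N(n, k)` for patterns of length `k` satisfies Pascal's recurrence
`N(n + 1, k + 1) = N(n, k) + N(n, k + 1)` with `N(n, 0) = 0` and `N(0, k + 1) = 1`, which the
partial row sums `∑_{j < k} (n choose j)` satisfy as well.
-/

open Finset

theorem Nat.sum_range_succ_choose_succ (k n : ℕ) :
    ∑ j ∈ range (k + 1), (n + 1).choose j =
      ∑ j ∈ range k, n.choose j + ∑ j ∈ range (k + 1), n.choose j := by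
  rw [sum_range_succ', sum_range_succ' (fun j => n.choose j)]
  simp only [Nat.choose_succ_succ', sum_add_distrib, Nat.choose_zero_right]
  ring

namespace List

variable {α : Type*}

def avoiders (n : ℕ) (w : List α) : Set (List α) :=
  {v | v.length = n ∧ ¬ w.Sublist v}

theorem avoiders_finite [Finite α] (n : ℕ) (w : List α) : (avoiders n w).Finite :=
  (List.finite_length_eq α n).subset fun _ hv => hv.1

@[simp]
theorem avoiders_nil (n : ℕ) : avoiders n ([] : List α) = ∅ := by
  simp [avoiders]

@[simp]
theorem avoiders_zero_cons (a : α) (w : List α) : avoiders 0 (a :: w) = {[]} := by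
  ext v
  constructor
  · exact fun hv => List.length_eq_zero_iff.mp hv.1
  · rintro rfl
    exact ⟨rfl, by simp⟩

theorem avoiders_succ_cons_bool (n : ℕ) (a : Bool) (w : List Bool) :
    avoiders (n + 1) (a :: w) =
      cons a '' avoiders n w ∪ cons (!a) '' avoiders n (a :: w) := by
  ext v
  constructor
  · rintro ⟨hlen, hv⟩
    obtain ⟨b, v, rfl⟩ := List.exists_cons_of_length_eq_add_one hlen
    rw [length_cons, Nat.succ_inj] at hlen
    rcases Bool.eq_or_eq_not b a with rfl | rfl
    · exact Or.inl ⟨v, ⟨hlen, fun h => hv (h.cons_cons b)⟩, rfl⟩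
    · exact Or.inr ⟨v, ⟨hlen, fun h => hv (h.cons _)⟩, rfl⟩
  · rintro (⟨v, ⟨hlen, hv⟩, rfl⟩ | ⟨v, ⟨hlen, hv⟩, rfl⟩)
    · exact ⟨by simp [hlen], fun h => hv (cons_sublist_cons.mp h)⟩
    · refine ⟨by simp [hlen], fun h => ?_⟩
      rcases cons_sublist_cons'.mp h with h | ⟨hab, -⟩
      · exact hv h
      · simp at hab

theorem ncard_avoiders_bool (n : ℕ) (w : List Bool) :
    (avoiders n w).ncard = ∑ j ∈ Finset.range w.length, n.choose j := by
  induction n generalizing w with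
  | zero =>
    cases w with
    | nil => simp
    | cons a w => simp [Finset.sum_range_succ']
  | succ n ih =>
    cases w with
    | nil => simp
    | cons a w =>
      have hdisj : _root_.Disjoint (cons a '' avoiders n w) (cons (!a) '' avoiders n (a :: w)) := by
        rw [Set.disjoint_left]
        rintro _ ⟨_, -, rfl⟩ ⟨_, -, h⟩
        simp at h
      rw [avoiders_succ_cons_bool, Set.ncard_union_eq hdisj
          ((avoiders_finite n _).image _) ((avoiders_finite n _).image _),
        Set.ncard_image_of_injective _ cons_injective, Set.ncard_image_of_injective _ cons_injective,
        ih, ih, length_cons, Nat.sum_range_succ_choose_succ]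

end List

theorem count_words_avoiding_pattern_general (k n : ℕ) (w : List Bool)
    (hw : w.length = k) :
    {v : List Bool | v.length = n ∧ ¬ w.Sublist v}.ncard =
      ∑ j ∈ Finset.range k, n.choose j := by
  rw [← hw]
  exact List.ncard_avoiders_bool n w

/-- For every binary word `w` of length `k ≥ 1` and every `n ≥ 0`, the number of
binary words of length `n` that avoid `w` (i.e. do not contain `w` as a not
necessarily contiguous subsequence) equals `Σ_{j=0}^{k−1} binom(n, j)`. -/
theorem count_words_avoiding_pattern (k n : ℕ) (hk : 1 ≤ k) (w : List Bool)
    (hw : w.length = k) :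
    {v : List Bool | v.length = n ∧ ¬ w.Sublist v}.ncard =
      ∑ j ∈ Finset.range k, n.choose j :=
  count_words_avoiding_pattern_general k n w hw
end

section
/- Let k ≥ 2 and let π be a Grassmannian permutation of {1,…,k} that is not the identity. For every n ≥ 0, the number of Grassmannian permutations of {1,…,n} that avoid π equals 1 + Σ_{j=2}^{k−1} binom(n, j). -/
/-- A permutation `σ` of `{1,…,n}` contains a pattern `π` of `{1,…,k}` if there
are indices `h(1) < ⋯ < h(k)` such that `σ(h(i)) < σ(h(j)) ↔ π(i) < π(j)`. -/
def Contains {n k : ℕ} (σ : Equiv.Perm (Fin n)) (π : Equiv.Perm (Fin k)) : Prop :=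
  ∃ f : Fin k → Fin n, StrictMono f ∧ ∀ i j : Fin k, σ (f i) < σ (f j) ↔ π i < π j

open Finset


variable {n k : ℕ}

/-- `A` is a lower set of `Fin n`. -/
def LowerS {n : ℕ} (A : Finset (Fin n)) : Prop := ∀ i j : Fin n, i ≤ j → j ∈ A → i ∈ A

lemma card_compl' (A : Finset (Fin n)) : Aᶜ.card = n - A.card := by
  simp [Finset.card_compl]

/-- The Grassmannian permutation with first ascending run taking values `A`. -/
noncomputable def permOfFun (A : Finset (Fin n)) (i : Fin n) : Fin n :=
  if h : (i : ℕ) < A.card then A.orderEmbOfFin rfl ⟨i, h⟩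
  else Aᶜ.orderEmbOfFin (card_compl' A) ⟨(i : ℕ) - A.card,
    Nat.sub_lt_sub_right (le_of_not_gt h) i.2⟩

lemma permOfFun_lt (A : Finset (Fin n)) (i : Fin n) (h : (i : ℕ) < A.card) :
    permOfFun A i = A.orderEmbOfFin rfl ⟨i, h⟩ := dif_pos h

lemma permOfFun_ge (A : Finset (Fin n)) (i : Fin n) (h : ¬ (i : ℕ) < A.card) :
    permOfFun A i = Aᶜ.orderEmbOfFin (card_compl' A) ⟨(i : ℕ) - A.card,
      Nat.sub_lt_sub_right (le_of_not_gt h) i.2⟩ := dif_neg h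

lemma permOfFun_mem_iff (A : Finset (Fin n)) (i : Fin n) :
    permOfFun A i ∈ A ↔ (i : ℕ) < A.card := by
  by_cases h : (i : ℕ) < A.card
  · simp [permOfFun_lt A i h, Finset.orderEmbOfFin_mem, h]
  · rw [permOfFun_ge A i h]
    simp only [h, iff_false]
    have := Finset.orderEmbOfFin_mem Aᶜ (card_compl' A) ⟨(i : ℕ) - A.card,
      Nat.sub_lt_sub_right (le_of_not_gt h) i.2⟩
    rw [Finset.mem_compl] at this
    exact this

lemma permOfFun_bij (A : Finset (Fin n)) : Function.Bijective (permOfFun A) := by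
  constructor
  · intro i j hij
    by_cases hi : (i : ℕ) < A.card <;> by_cases hj : (j : ℕ) < A.card
    · rw [permOfFun_lt A i hi, permOfFun_lt A j hj] at hij
      have h2 := (A.orderEmbOfFin rfl).injective hij
      have h3 := congrArg Fin.val h2
      simp only [Fin.val_mk] at h3
      exact Fin.ext h3
    · exfalso; have h1 := (permOfFun_mem_iff A i).2 hi
      rw [hij, permOfFun_mem_iff] at h1; exact hj h1
    · exfalso; have h1 := (permOfFun_mem_iff A j).2 hj
      rw [← hij, permOfFun_mem_iff] at h1; exact hi h1
    · rw [permOfFun_ge A i hi, permOfFun_ge A j hj] at hij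
      have h1 := (Aᶜ.orderEmbOfFin (card_compl' A)).injective hij
      have h2 := congrArg Fin.val h1
      simp only [Fin.val_mk] at h2
      have : (i:ℕ) = (j:ℕ) := by omega
      exact Fin.ext this
  · intro x
    by_cases hx : x ∈ A
    · obtain ⟨r, hr⟩ : x ∈ Set.range (A.orderEmbOfFin rfl) := by
        rw [Finset.range_orderEmbOfFin]; exact hx
      have hrn : (r : ℕ) < n := lt_of_lt_of_le r.2 (by simpa using A.card_le_univ)
      refine ⟨⟨r, hrn⟩, ?_⟩
      rw [permOfFun_lt A ⟨r, hrn⟩ r.2]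
      simpa using hr
    · have hx' : x ∈ Aᶜ := Finset.mem_compl.2 hx
      obtain ⟨r, hr⟩ : x ∈ Set.range (Aᶜ.orderEmbOfFin (card_compl' A)) := by
        rw [Finset.range_orderEmbOfFin]; exact hx'
      have hrn : A.card + (r : ℕ) < n := by
        have := r.2
        omega
      refine ⟨⟨A.card + r, hrn⟩, ?_⟩
      have hge : ¬ (A.card + (r:ℕ) < A.card) := by omega
      rw [permOfFun_ge A ⟨A.card + r, hrn⟩ hge]
      convert hr using 2
      ext
      simp

noncomputable def permOf (A : Finset (Fin n)) : Equiv.Perm (Fin n) :=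
  Equiv.ofBijective _ (permOfFun_bij A)

lemma permOf_apply (A : Finset (Fin n)) (i : Fin n) : permOf A i = permOfFun A i := rfl

lemma permOf_mem_iff (A : Finset (Fin n)) (i : Fin n) :
    permOf A i ∈ A ↔ (i : ℕ) < A.card := permOfFun_mem_iff A i

/-- monotone within each run -/
lemma permOf_lt_run (A : Finset (Fin n)) {i j : Fin n} (hij : i < j)
    (h : (j : ℕ) < A.card ∨ A.card ≤ (i : ℕ)) : permOf A i < permOf A j := by
  rcases h with h | h
  · have hi : (i : ℕ) < A.card := lt_trans hij h
    rw [permOf_apply, permOf_apply, permOfFun_lt A i hi, permOfFun_lt A j h]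
    exact (A.orderEmbOfFin rfl).strictMono (by exact hij)
  · have hi : ¬ (i : ℕ) < A.card := not_lt.2 h
    have hj : ¬ (j : ℕ) < A.card := not_lt.2 (le_trans h (le_of_lt hij))
    rw [permOf_apply, permOf_apply, permOfFun_ge A i hi, permOfFun_ge A j hj]
    refine (Aᶜ.orderEmbOfFin (card_compl' A)).strictMono ?_
    show (i : ℕ) - A.card < (j : ℕ) - A.card
    have : (i:ℕ) < (j:ℕ) := hij
    omega

/-- reflects: positions come in order -/
lemma lt_of_permOf (A : Finset (Fin n)) {i j : Fin n}
    (h : (permOf A i ∈ A ∧ permOf A j ∉ A) ∨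
      ((permOf A i ∈ A ↔ permOf A j ∈ A) ∧ permOf A i < permOf A j)) : i < j := by
  rcases h with ⟨h1, h2⟩ | ⟨h1, h2⟩
  · rw [permOf_mem_iff] at h1 h2
    exact Fin.lt_def.2 (by omega)
  · by_cases hi : permOf A i ∈ A
    · have hj := h1.1 hi
      rw [permOf_mem_iff] at hi hj
      rw [permOf_apply, permOf_apply, permOfFun_lt A i hi, permOfFun_lt A j hj] at h2
      have := (A.orderEmbOfFin rfl).lt_iff_lt.1 h2
      exact Fin.lt_def.2 this
    · have hj : permOf A j ∉ A := fun hj => hi (h1.2 hj)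
      rw [permOf_mem_iff] at hi hj
      rw [permOf_apply, permOfFun_ge A i hi, permOf_apply, permOfFun_ge A j hj] at h2
      have := (Aᶜ.orderEmbOfFin (card_compl' A)).lt_iff_lt.1 h2
      have h3 : (i:ℕ) - A.card < (j:ℕ) - A.card := this
      exact Fin.lt_def.2 (by omega)

lemma permOf_grassmannian (A : Finset (Fin n)) : IsGrassmannian (permOf A) := by
  intro i hi j hj
  simp only [Set.mem_setOf_eq] at hi hj
  obtain ⟨hi1, hi2⟩ := hi
  obtain ⟨hj1, hj2⟩ := hj
  have key : ∀ m : ℕ, ∀ hm : m + 1 < n,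
      permOf A ⟨m + 1, hm⟩ < permOf A ⟨m, Nat.lt_of_succ_lt hm⟩ → m + 1 = A.card := by
    intro m hm hlt
    by_contra hne
    have : (⟨m, Nat.lt_of_succ_lt hm⟩ : Fin n) < ⟨m + 1, hm⟩ := by simp [Fin.lt_def]
    have := permOf_lt_run A this (by
      show m + 1 < A.card ∨ A.card ≤ m
      omega)
    exact absurd hlt (asymm this)
  have := key i hi1 hi2
  have := key j hj1 hj2
  omega

lemma chain_lt_s2 (σ : Equiv.Perm (Fin n)) {a b : ℕ} (hab : a < b) (ha : a < n) (hb : b < n)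
    (h : ∀ m, ∀ hm : m + 1 < n, a ≤ m → m + 1 ≤ b →
      σ ⟨m, Nat.lt_of_succ_lt hm⟩ < σ ⟨m + 1, hm⟩) :
    σ ⟨a, ha⟩ < σ ⟨b, hb⟩ := by
  induction b with
  | zero => omega
  | succ b ih =>
    rcases Nat.lt_or_ge a b with hab' | hab'
    · have hb' : b < n := by omega
      refine lt_trans (ih hab' hb' (fun m hm h1 h2 => h m hm h1 (by omega))) ?_
      exact h b hb (by omega) (by omega)
    · have : a = b := by omega
      subst this
      exact h a hb (le_refl a) (by omega)

lemma not_lowerS_iff {A : Finset (Fin n)} :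
    ¬ LowerS A ↔ ∃ i j : Fin n, i < j ∧ i ∉ A ∧ j ∈ A := by
  unfold LowerS
  push_neg
  constructor
  · rintro ⟨i, j, h1, h2, h3⟩
    exact ⟨i, j, lt_of_le_of_ne h1 (fun e => h3 (e ▸ h2)), h3, h2⟩
  · rintro ⟨i, j, h1, h2, h3⟩
    exact ⟨i, j, le_of_lt h1, h3, h2⟩

lemma permOf_card_pos {A : Finset (Fin n)} (hA : ¬ LowerS A) :
    1 ≤ A.card ∧ A.card < n := by
  obtain ⟨i, j, hij, hi, hj⟩ := not_lowerS_iff.1 hA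
  constructor
  · exact Finset.card_pos.2 ⟨j, hj⟩
  · have : A ≠ Finset.univ := fun h => hi (h ▸ Finset.mem_univ i)
    have := Finset.card_lt_card (Finset.ssubset_univ_iff.2 this)
    simpa using this

lemma permOf_max (A : Finset (Fin n)) {a : Fin n} (ha : a ∈ A) (h1 : 1 ≤ A.card)
    (hcn : A.card - 1 < n) : a ≤ permOf A ⟨A.card - 1, hcn⟩ := by
  set i := (permOf A).symm a with hi
  have hia : permOf A i = a := Equiv.apply_symm_apply _ a
  have hilt : (i : ℕ) < A.card := (permOf_mem_iff A i).1 (hia ▸ ha)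
  rcases Nat.lt_or_ge (i : ℕ) (A.card - 1) with h | h
  · have := permOf_lt_run A (show i < ⟨A.card - 1, hcn⟩ from h) (Or.inl (show A.card - 1 < A.card by omega))
    rw [hia] at this; exact le_of_lt this
  · have : i = (⟨A.card - 1, hcn⟩ : Fin n) := Fin.ext (show (i : ℕ) = A.card - 1 by omega)
    rw [← hia, this]

lemma permOf_min (A : Finset (Fin n)) {b : Fin n} (hb : b ∉ A) (hcn : A.card < n) :
    permOf A ⟨A.card, hcn⟩ ≤ b := by
  set j := (permOf A).symm b with hj
  have hjb : permOf A j = b := Equiv.apply_symm_apply _ b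
  have hjge : ¬ ((j : ℕ) < A.card) := fun h => hb (hjb ▸ (permOf_mem_iff A j).2 h)
  rcases Nat.lt_or_ge (A.card) (j : ℕ) with h | h
  · have := permOf_lt_run A (show (⟨A.card, hcn⟩ : Fin n) < j from h) (Or.inr (le_refl _))
    rw [hjb] at this; exact le_of_lt this
  · have : j = (⟨A.card, hcn⟩ : Fin n) := Fin.ext (show (j : ℕ) = A.card by omega)
    rw [← hjb, this]

lemma permOf_descent {A : Finset (Fin n)} (hA : ¬ LowerS A) :
    ∃ h : (A.card - 1) + 1 < n,
      permOf A ⟨(A.card - 1) + 1, h⟩ < permOf A ⟨A.card - 1, by omega⟩ := by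
  obtain ⟨h1, h2⟩ := permOf_card_pos hA
  refine ⟨by omega, ?_⟩
  obtain ⟨x, y, hxy, hx, hy⟩ := not_lowerS_iff.1 hA
  have q1 : permOf A ⟨(A.card - 1) + 1, by omega⟩ = permOf A ⟨A.card, h2⟩ := by
    congr 1; exact Fin.ext (show (A.card - 1) + 1 = A.card by omega)
  rw [q1]
  calc permOf A ⟨A.card, h2⟩ ≤ x := permOf_min A hx h2
    _ < y := hxy
    _ ≤ permOf A ⟨A.card - 1, by omega⟩ := permOf_max A hy h1 (by omega)

lemma grassmannian_strictMono {σ : Equiv.Perm (Fin n)}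
    (h : ∀ m, ∀ hm : m + 1 < n, σ ⟨m, Nat.lt_of_succ_lt hm⟩ < σ ⟨m + 1, hm⟩) :
    σ = Equiv.refl (Fin n) := by
  have hmono : StrictMono ⇑σ := by
    intro i j hij
    have := chain_lt_s2 σ (show (i : ℕ) < (j : ℕ) from hij) i.2 j.2
      (fun m hm h1 h2 => h m hm)
    simpa using this
  have hcard : (Finset.univ : Finset (Fin n)).card = n := by simp
  have h1 := Finset.orderEmbOfFin_unique hcard (f := ⇑σ) (fun x => Finset.mem_univ _) hmono
  have h2 := Finset.orderEmbOfFin_unique hcard (f := (id : Fin n → Fin n))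
    (fun x => Finset.mem_univ _) strictMono_id
  ext i
  have : ⇑σ = id := h1.trans h2.symm
  simp [this]

lemma grassmannian_classify {σ : Equiv.Perm (Fin n)} (hσ : IsGrassmannian σ) :
    σ = Equiv.refl (Fin n) ∨ ∃ A : Finset (Fin n), ¬ LowerS A ∧ σ = permOf A := by
  by_cases hd : ∀ m, ∀ hm : m + 1 < n, σ ⟨m, Nat.lt_of_succ_lt hm⟩ < σ ⟨m + 1, hm⟩
  · exact Or.inl (grassmannian_strictMono hd)
  · right
    push_neg at hd
    obtain ⟨e, he, hde⟩ := hd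
    have hde : σ ⟨e + 1, he⟩ < σ ⟨e, Nat.lt_of_succ_lt he⟩ := by
      rcases lt_trichotomy (σ ⟨e + 1, he⟩) (σ ⟨e, Nat.lt_of_succ_lt he⟩) with h | h | h
      · exact h
      · exact absurd (σ.injective h) (by simp [Fin.ext_iff])
      · exact absurd h (not_lt.2 hde)
    -- every adjacent pair other than e is an ascent
    have hasc : ∀ m, ∀ hm : m + 1 < n, m ≠ e →
        σ ⟨m, Nat.lt_of_succ_lt hm⟩ < σ ⟨m + 1, hm⟩ := by
      intro m hm hme
      rcases lt_trichotomy (σ ⟨m, Nat.lt_of_succ_lt hm⟩) (σ ⟨m + 1, hm⟩) with h | h | h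
      · exact h
      · exact absurd (σ.injective h) (by simp [Fin.ext_iff])
      · exact absurd (hσ (show m ∈ _ from ⟨hm, h⟩) (show e ∈ _ from ⟨he, hde⟩)) hme
    set d := e + 1 with hdd
    have hdn : d < n := he
    -- the image of the first run
    set A : Finset (Fin n) := Finset.image (fun r : Fin d => σ ⟨r, lt_trans r.2 hdn⟩)
      Finset.univ with hAdef
    have hAcard : A.card = d := by
      rw [hAdef, Finset.card_image_of_injective _ ?_, Finset.card_univ, Fintype.card_fin]
      intro r r' hrr
      have := σ.injective hrr
      simpa [Fin.ext_iff] using this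
    have hmemA : ∀ i : Fin n, (i : ℕ) < d → σ i ∈ A := by
      intro i hi
      rw [hAdef]
      exact Finset.mem_image.2 ⟨⟨i, hi⟩, Finset.mem_univ _, by congr⟩
    have hmemA' : ∀ i : Fin n, ¬ ((i : ℕ) < d) → σ i ∉ A := by
      intro i hi hmem
      rw [hAdef] at hmem
      obtain ⟨r, _, hr⟩ := Finset.mem_image.1 hmem
      have := σ.injective hr
      rw [Fin.ext_iff] at this
      simp at this
      omega
    refine ⟨A, ?_, ?_⟩
    · rw [not_lowerS_iff]
      refine ⟨σ ⟨e + 1, he⟩, σ ⟨e, Nat.lt_of_succ_lt he⟩, hde, ?_, ?_⟩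
      · exact hmemA' _ (by simp [hdd])
      · exact hmemA _ (by simp [hdd])
    · -- σ = permOf A via uniqueness of monotone parametrizations
      have hf1 : (fun r : Fin A.card => σ ⟨r, by omega⟩) = A.orderEmbOfFin rfl := by
        refine Finset.orderEmbOfFin_unique rfl ?_ ?_
        · intro r; exact hmemA _ (by simpa using (hAcard ▸ r.2))
        · intro r r' hrr
          refine chain_lt_s2 σ (show (r : ℕ) < (r' : ℕ) from hrr) _ _ ?_
          intro m hm h1 h2
          refine hasc m hm ?_
          have := r'.2; omega
      have hcompl : Aᶜ.card = n - A.card := card_compl' A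
      have hf2 : (fun r : Fin (n - A.card) => σ ⟨A.card + r, by omega⟩)
          = Aᶜ.orderEmbOfFin hcompl := by
        refine Finset.orderEmbOfFin_unique hcompl ?_ ?_
        · intro r
          refine Finset.mem_compl.2 (hmemA' _ ?_)
          simp [hAcard]
        · intro r r' hrr
          have hrr' : (r : ℕ) < (r' : ℕ) := hrr
          refine chain_lt_s2 σ (show A.card + (r : ℕ) < A.card + (r' : ℕ) by omega) _ _ ?_
          intro m hm h1 h2
          refine hasc m hm ?_
          omega
      ext i
      by_cases hi : (i : ℕ) < A.card
      · rw [permOf_apply, permOfFun_lt A i hi, ← hf1]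
      · rw [permOf_apply, permOfFun_ge A i hi, ← hf2]
        have hkey : σ i = σ ⟨A.card + ((i : ℕ) - A.card), by omega⟩ := by
          congr 1
          exact Fin.ext (show (i : ℕ) = A.card + ((i : ℕ) - A.card) by omega)
        exact congrArg Fin.val hkey

lemma permOf_ne_refl {A : Finset (Fin n)} (hA : ¬ LowerS A) :
    permOf A ≠ Equiv.refl (Fin n) := by
  intro h
  obtain ⟨hlt, hdesc⟩ := permOf_descent hA
  rw [h] at hdesc
  simp only [Equiv.refl_apply] at hdesc
  rw [Fin.lt_def] at hdesc
  simp at hdesc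

lemma permOf_inj {A A' : Finset (Fin n)} (hA : ¬ LowerS A) (hA' : ¬ LowerS A')
    (h : permOf A = permOf A') : A = A' := by
  have hcard : A.card = A'.card := by
    obtain ⟨h1, hd1⟩ := permOf_descent hA
    obtain ⟨h1', hd1'⟩ := permOf_descent hA'
    rw [h] at hd1
    have hg := permOf_grassmannian A'
    have e1 : A.card - 1 ∈ {i : ℕ | ∃ h : i + 1 < n,
        permOf A' ⟨i + 1, h⟩ < permOf A' ⟨i, Nat.lt_of_succ_lt h⟩} := ⟨h1, hd1⟩
    have e2 : A'.card - 1 ∈ {i : ℕ | ∃ h : i + 1 < n,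
        permOf A' ⟨i + 1, h⟩ < permOf A' ⟨i, Nat.lt_of_succ_lt h⟩} := ⟨h1', hd1'⟩
    have := hg e1 e2
    have c1 := (permOf_card_pos hA).1
    have c2 := (permOf_card_pos hA').1
    omega
  ext x
  have k1 : x ∈ A ↔ ((permOf A).symm x : ℕ) < A.card := by
    conv_lhs => rw [← Equiv.apply_symm_apply (permOf A) x]
    exact permOf_mem_iff A _
  have k2 : x ∈ A' ↔ ((permOf A').symm x : ℕ) < A'.card := by
    conv_lhs => rw [← Equiv.apply_symm_apply (permOf A') x]
    exact permOf_mem_iff A' _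
  rw [k1, k2, h, hcard]

/-- word-level containment of patterns -/
def ContB {n k : ℕ} (A : Finset (Fin n)) (B : Finset (Fin k)) : Prop :=
  ∃ g : Fin k → Fin n, StrictMono g ∧ ∀ v, g v ∈ A ↔ v ∈ B

lemma eq_refl_of_strictMono {σ : Equiv.Perm (Fin n)} (hmono : StrictMono ⇑σ) :
    σ = Equiv.refl (Fin n) := by
  have hcard : (Finset.univ : Finset (Fin n)).card = n := by simp
  have h1 := Finset.orderEmbOfFin_unique hcard (f := ⇑σ) (fun x => Finset.mem_univ _) hmono
  have h2 := Finset.orderEmbOfFin_unique hcard (f := (id : Fin n → Fin n))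
    (fun x => Finset.mem_univ _) strictMono_id
  ext i
  have : ⇑σ = id := h1.trans h2.symm
  simp [this]

lemma contains_refl {n k : ℕ} {π : Equiv.Perm (Fin k)} (h : Contains (Equiv.refl (Fin n)) π) :
    π = Equiv.refl (Fin k) := by
  obtain ⟨f, hf, hpat⟩ := h
  refine eq_refl_of_strictMono ?_
  intro i j hij
  exact (hpat i j).1 (by simpa using hf hij)

lemma contains_permOf_iff {n k : ℕ} {A : Finset (Fin n)} {B : Finset (Fin k)}
    (hB : ¬ LowerS B) : Contains (permOf A) (permOf B) ↔ ContB A B := by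
  constructor
  · rintro ⟨f, hf, hpat⟩
    obtain ⟨h1, hd⟩ := permOf_descent hB
    have c1 := (permOf_card_pos hB).1
    set t := B.card with ht
    set p : Fin k := ⟨t - 1, by omega⟩ with hp
    set q : Fin k := ⟨(t - 1) + 1, h1⟩ with hq
    have hqv : (q : ℕ) = t := by simp [hq]; omega
    have hfd : permOf A (f q) < permOf A (f p) := (hpat q p).2 hd
    have hfpq : f p < f q := hf (show p < q by simp [hp, hq, Fin.lt_def])
    have hsplit : ((f p : ℕ)) < A.card ∧ A.card ≤ ((f q : ℕ)) := by
      by_cases e1 : ((f q : ℕ)) < A.card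
      · exfalso
        exact absurd hfd (asymm (permOf_lt_run A hfpq (Or.inl e1)))
      · refine ⟨?_, le_of_not_gt e1⟩
        by_contra e2
        exact absurd hfd (asymm (permOf_lt_run A hfpq (Or.inr (le_of_not_gt e2))))
    have halign : ∀ i : Fin k, ((f i : ℕ) < A.card ↔ (i : ℕ) < t) := by
      intro i
      constructor
      · intro hfi
        by_contra hit
        have : q ≤ i := by rw [Fin.le_def]; omega
        have : f q ≤ f i := hf.monotone this
        omega
      · intro hit
        have : i ≤ p := by rw [Fin.le_def]; simp [hp]; omega
        have : f i ≤ f p := hf.monotone this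
        omega
    refine ⟨fun v => permOf A (f ((permOf B).symm v)), ?_, ?_⟩
    · intro v w hvw
      refine (hpat _ _).2 ?_
      rwa [Equiv.apply_symm_apply, Equiv.apply_symm_apply]
    · intro v
      rw [permOf_mem_iff, halign]
      conv_rhs => rw [← Equiv.apply_symm_apply (permOf B) v]
      exact (permOf_mem_iff B _).symm
  · rintro ⟨g, hg, hgm⟩
    refine ⟨fun i => (permOf A).symm (g (permOf B i)), ?_, ?_⟩
    · intro i j hij
      have hij' : (i : ℕ) < (j : ℕ) := hij
      refine lt_of_permOf A ?_
      rw [Equiv.apply_symm_apply, Equiv.apply_symm_apply]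
      by_cases hjc : (j : ℕ) < B.card
      · have hic : (i : ℕ) < B.card := by omega
        have hx : permOf B i ∈ B := (permOf_mem_iff B i).2 hic
        have hy : permOf B j ∈ B := (permOf_mem_iff B j).2 hjc
        have hlt : permOf B i < permOf B j := permOf_lt_run B hij (Or.inl hjc)
        exact Or.inr ⟨by rw [hgm, hgm]; simp [hx, hy], hg hlt⟩
      · by_cases hic : (i : ℕ) < B.card
        · have hx : permOf B i ∈ B := (permOf_mem_iff B i).2 hic
          have hy : permOf B j ∉ B := fun hy => hjc ((permOf_mem_iff B j).1 hy)
          exact Or.inl ⟨(hgm _).2 hx, fun hc => hy ((hgm _).1 hc)⟩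
        · have hx : permOf B i ∉ B := fun hx => hic ((permOf_mem_iff B i).1 hx)
          have hy : permOf B j ∉ B := fun hy => hjc ((permOf_mem_iff B j).1 hy)
          have hlt : permOf B i < permOf B j :=
            permOf_lt_run B hij (Or.inr (le_of_not_gt hic))
          exact Or.inr ⟨by
            constructor
            · intro hc; exact absurd ((hgm _).1 hc) hx
            · intro hc; exact absurd ((hgm _).1 hc) hy, hg hlt⟩
    · intro i j
      rw [Equiv.apply_symm_apply, Equiv.apply_symm_apply, hg.lt_iff_lt]

/-! ### Counting binary words avoiding a fixed subword -/

/-- all binary words of length `m` -/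
def W : ℕ → Finset (List Bool)
  | 0 => {[]}
  | m + 1 => (W m).image (true :: ·) ∪ (W m).image (false :: ·)

lemma mem_W {m : ℕ} {w : List Bool} : w ∈ W m ↔ w.length = m := by
  induction m generalizing w with
  | zero => simp [W]
  | succ m ih =>
    constructor
    · intro hw
      simp only [W, Finset.mem_union, Finset.mem_image] at hw
      rcases hw with ⟨v, hv, rfl⟩ | ⟨v, hv, rfl⟩ <;> simp [ih.1 hv]
    · intro hw
      match w with
      | c :: v =>
        have : v ∈ W m := ih.2 (by simpa using hw)
        cases c
        · exact Finset.mem_union_right _ (Finset.mem_image_of_mem _ this)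
        · exact Finset.mem_union_left _ (Finset.mem_image_of_mem _ this)

lemma sum_choose_succ (n m : ℕ) :
    ∑ j ∈ Finset.range (m + 1), (n + 1).choose j
      = ∑ j ∈ Finset.range m, n.choose j + ∑ j ∈ Finset.range (m + 1), n.choose j := by
  induction m with
  | zero => simp
  | succ m ih =>
    rw [Finset.sum_range_succ, ih, Nat.choose_succ_succ,
      Finset.sum_range_succ (f := fun j => n.choose j) (n := m + 1),
      Finset.sum_range_succ (f := fun j => n.choose j) (n := m)]
    ring

lemma count_avoid : ∀ (n : ℕ) (u : List Bool),
    ((W n).filter (fun w => ¬ u.Sublist w)).card = ∑ j ∈ Finset.range u.length, n.choose j := by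
  intro n
  induction n with
  | zero =>
    intro u
    match u with
    | [] => simp
    | a :: u' =>
      rw [show (W 0) = {[]} from rfl]
      rw [Finset.filter_singleton, if_pos (by simp), Finset.card_singleton,
        List.length_cons, Finset.sum_range_succ']
      simp
  | succ n ih =>
    intro u
    have hsplit : ((W (n+1)).filter (fun w => ¬ u.Sublist w)).card
        = ((W n).filter (fun w => ¬ u.Sublist (true :: w))).card
          + ((W n).filter (fun w => ¬ u.Sublist (false :: w))).card := by
      have hdisj : Disjoint (((W n).image (true :: ·)).filter (fun w => ¬ u.Sublist w))
          (((W n).image (false :: ·)).filter (fun w => ¬ u.Sublist w)) := by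
        refine Finset.disjoint_filter_filter ?_
        rw [Finset.disjoint_left]
        rintro x hx hy
        obtain ⟨v, _, rfl⟩ := Finset.mem_image.1 hx
        obtain ⟨v', _, he⟩ := Finset.mem_image.1 hy
        simpa using he
      show ((((W n).image (true :: ·)) ∪ ((W n).image (false :: ·))).filter _).card = _
      rw [Finset.filter_union, Finset.card_union_of_disjoint hdisj, Finset.filter_image,
        Finset.filter_image, Finset.card_image_of_injective _ (by
          intro a b h; simpa using h), Finset.card_image_of_injective _ (by
          intro a b h; simpa using h)]
    match u with
    | [] => simp
    | a :: u' =>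
      have key : ∀ c : Bool,
          ((W n).filter (fun w => ¬ (a :: u').Sublist (c :: w))).card
            = if a = c then ∑ j ∈ Finset.range u'.length, n.choose j
              else ∑ j ∈ Finset.range (a :: u').length, n.choose j := by
        intro c
        by_cases hac : a = c
        · subst hac
          rw [if_pos rfl, ← ih u']
          congr 1
          apply Finset.filter_congr
          intro w _
          simp only [List.cons_sublist_cons', eq_self_iff_true, true_and, not_or, decide_eq_decide]
          constructor
          · rintro ⟨h1, h2⟩; exact h2
          · intro h2
            refine ⟨fun hc => h2 ?_, h2⟩
            exact (List.sublist_cons_self a u').trans hc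
        · rw [if_neg hac, ← ih (a :: u')]
          congr 1
          apply Finset.filter_congr
          intro w _
          simp only [List.cons_sublist_cons', not_or, decide_eq_decide]
          constructor
          · rintro ⟨h1, _⟩; exact h1
          · intro h1; exact ⟨h1, fun hc => absurd hc.1 hac⟩
      rw [hsplit, key true, key false]
      cases a
      · rw [if_neg (by simp), if_pos rfl, List.length_cons, sum_choose_succ, add_comm]
      · rw [if_pos rfl, if_neg (by simp), List.length_cons, sum_choose_succ]

/-! ### From subsets to words -/

/-- the indicator word of a subset of `Fin n` -/
def wd {n : ℕ} (A : Finset (Fin n)) : List Bool := List.ofFn (fun i => decide (i ∈ A))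

lemma length_wd (A : Finset (Fin n)) : (wd A).length = n := by simp [wd]

lemma wd_injective : Function.Injective (wd (n := n)) := by
  intro A A' h
  have := List.ofFn_injective h
  ext x
  have := congrFun this x
  simpa using this

lemma wd_mem_W (A : Finset (Fin n)) : wd A ∈ W n := mem_W.2 (length_wd A)

lemma exists_wd {w : List Bool} (hw : w.length = n) : ∃ A : Finset (Fin n), wd A = w := by
  refine ⟨Finset.univ.filter (fun i => w.get ⟨(i : ℕ), hw ▸ i.2⟩ = true), ?_⟩
  refine List.ext_get (by simp [length_wd, hw]) ?_
  intro i h1 h2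
  simp only [wd]
  rw [List.get_ofFn]
  simp only [Finset.mem_filter, Finset.mem_univ, true_and]
  show decide (w.get ⟨i, h2⟩ = true) = w.get ⟨i, h2⟩
  cases hg : w.get ⟨i, h2⟩ <;> rfl

lemma contB_iff_sublist {A : Finset (Fin n)} {B : Finset (Fin k)} :
    ContB A B ↔ (wd B).Sublist (wd A) := by
  rw [List.sublist_iff_exists_fin_orderEmbedding_get_eq]
  constructor
  · rintro ⟨g, hg, hgm⟩
    refine ⟨OrderEmbedding.ofStrictMono
      (fun ix => Fin.cast (length_wd A).symm (g (Fin.cast (length_wd B) ix))) ?_, ?_⟩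
    · intro i j hij
      exact hg (show Fin.cast (length_wd B) i < Fin.cast (length_wd B) j from hij)
    · intro ix
      simp only [List.get_eq_getElem]
      simp only [wd, List.getElem_ofFn]
      rw [decide_eq_decide]
      exact (hgm (Fin.cast (length_wd B) ix)).symm
  · rintro ⟨f, hf⟩
    refine ⟨fun v => Fin.cast (length_wd A) (f (Fin.cast (length_wd B).symm v)), ?_, ?_⟩
    · intro v w hvw
      have : f (Fin.cast (length_wd B).symm v) < f (Fin.cast (length_wd B).symm w) :=
        f.strictMono (show Fin.cast _ v < Fin.cast _ w from hvw)
      exact this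
    · intro v
      have := hf (Fin.cast (length_wd B).symm v)
      simp only [wd] at this
      rw [List.get_ofFn, List.get_ofFn, decide_eq_decide] at this
      show Fin.cast (length_wd A) (f (Fin.cast (length_wd B).symm v)) ∈ A ↔ v ∈ B
      exact this.symm

lemma ncard_avoiders (B : Finset (Fin k)) :
    {A : Finset (Fin n) | ¬ ContB A B}.ncard = ∑ j ∈ Finset.range k, n.choose j := by
  have himg : wd '' {A : Finset (Fin n) | ¬ ContB A B}
      = ↑((W n).filter (fun w => ¬ (wd B).Sublist w)) := by
    ext w
    simp only [Set.mem_image, Finset.coe_filter, Set.mem_setOf_eq]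
    constructor
    · rintro ⟨A, hA, rfl⟩
      exact ⟨wd_mem_W A, fun hc => hA (contB_iff_sublist.2 hc)⟩
    · rintro ⟨hw, hc⟩
      obtain ⟨A, rfl⟩ := exists_wd (mem_W.1 hw)
      exact ⟨A, fun h => hc (contB_iff_sublist.1 h), rfl⟩
  have h1 := Set.ncard_image_of_injective {A : Finset (Fin n) | ¬ ContB A B}
    (wd_injective (n := n))
  rw [himg, Set.ncard_coe_finset, count_avoid n (wd B)] at h1
  rw [← h1, length_wd]

lemma lowerS_mem_iff {A : Finset (Fin n)} (hA : LowerS A) (x : Fin n) :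
    x ∈ A ↔ (x : ℕ) < A.card := by
  constructor
  · intro hx
    have hsub : Finset.Iic x ⊆ A := fun y hy => hA y x (Finset.mem_Iic.1 hy) hx
    have := Finset.card_le_card hsub
    rw [Fin.card_Iic] at this
    omega
  · intro hx
    by_contra hxA
    have hsub : A ⊆ Finset.Iio x := by
      intro y hy
      refine Finset.mem_Iio.2 ?_
      rcases lt_or_ge y x with h | h
      · exact h
      · exact absurd (hA x y h hy) hxA
    have := Finset.card_le_card hsub
    rw [Fin.card_Iio] at this
    omega

lemma ncard_lower : {A : Finset (Fin n) | LowerS A}.ncard = n + 1 := by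
  have himg : Finset.card '' {A : Finset (Fin n) | LowerS A} = ↑(Finset.range (n + 1)) := by
    ext c
    simp only [Set.mem_image, Finset.coe_range, Set.mem_Iio, Set.mem_setOf_eq]
    constructor
    · rintro ⟨A, hA, rfl⟩
      have := A.card_le_univ
      simp only [Finset.card_univ, Fintype.card_fin] at this
      omega
    · intro hc
      rcases Nat.lt_or_ge c n with h | h
      · refine ⟨Finset.univ.filter (fun x : Fin n => (x : ℕ) < c), ?_, ?_⟩
        · intro i j hij hj
          simp only [Finset.mem_filter, Finset.mem_univ, true_and] at hj ⊢
          have : (i : ℕ) ≤ (j : ℕ) := hij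
          omega
        · have : Finset.univ.filter (fun x : Fin n => (x : ℕ) < c)
              = Finset.image (Fin.castLE (le_of_lt h)) Finset.univ := by
            ext x
            simp only [Finset.mem_filter, Finset.mem_univ, true_and, Finset.mem_image]
            constructor
            · intro hx
              refine ⟨⟨x, hx⟩, ?_⟩
              exact Fin.ext rfl
            · rintro ⟨y, rfl⟩; exact y.2
          rw [this, Finset.card_image_of_injective _ (Fin.castLE_injective _)]
          simp
      · refine ⟨Finset.univ, fun i j _ _ => Finset.mem_univ _, ?_⟩
        have := Finset.card_univ (α := Fin n)
        simp only [Fintype.card_fin] at this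
        omega
  have hinj : Set.InjOn Finset.card {A : Finset (Fin n) | LowerS A} := by
    intro A hA A' hA' h
    ext x
    rw [lowerS_mem_iff hA, lowerS_mem_iff hA', h]
  have h1 := Set.ncard_image_of_injOn hinj
  rw [himg, Set.ncard_coe_finset, Finset.card_range] at h1
  exact h1.symm

lemma lower_not_contB {A : Finset (Fin n)} {B : Finset (Fin k)}
    (hA : LowerS A) (hB : ¬ LowerS B) : ¬ ContB A B := by
  rintro ⟨g, hg, hgm⟩
  obtain ⟨i, j, hij, hi, hj⟩ := not_lowerS_iff.1 hB
  exact hi ((hgm i).1 (hA _ _ (le_of_lt (hg hij)) ((hgm j).2 hj)))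

lemma refl_grassmannian : IsGrassmannian (Equiv.refl (Fin n)) := by
  intro a ha b hb
  exfalso
  obtain ⟨h1, h2⟩ := ha
  simp only [Equiv.refl_apply, Fin.lt_def] at h2
  omega


/-- For `k ≥ 2` and a non-identity Grassmannian permutation `π` of size `k`, the
number of Grassmannian permutations of `{1,…,n}` avoiding `π` equals
`1 + Σ_{j=2}^{k−1} binom(n, j)`. -/
theorem count_grassmannian_avoiding_nonidentity (k n : ℕ) (hk : 2 ≤ k)
    (π : Equiv.Perm (Fin k)) (hπG : IsGrassmannian π) (hπ : π ≠ Equiv.refl (Fin k)) :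
    {σ : Equiv.Perm (Fin n) | IsGrassmannian σ ∧ ¬ Contains σ π}.ncard =
      1 + ∑ j ∈ Finset.Icc 2 (k - 1), n.choose j := by
  obtain ⟨B, hBl, rfl⟩ : ∃ B : Finset (Fin k), ¬ LowerS B ∧ π = permOf B := by
    rcases grassmannian_classify hπG with h | h
    · exact absurd h hπ
    · exact h
  -- description of the avoiding set
  have hset : {σ : Equiv.Perm (Fin n) | IsGrassmannian σ ∧ ¬ Contains σ (permOf B)}
      = insert (Equiv.refl (Fin n))
        (permOf '' {A : Finset (Fin n) | ¬ LowerS A ∧ ¬ ContB A B}) := by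
    ext σ
    simp only [Set.mem_setOf_eq, Set.mem_insert_iff, Set.mem_image]
    constructor
    · rintro ⟨hσG, hσC⟩
      rcases grassmannian_classify hσG with h | ⟨A, hAl, rfl⟩
      · exact Or.inl h
      · exact Or.inr ⟨A, ⟨hAl, fun hc => hσC ((contains_permOf_iff hBl).2 hc)⟩, rfl⟩
    · rintro (rfl | ⟨A, ⟨hAl, hAc⟩, rfl⟩)
      · exact ⟨refl_grassmannian, fun hc => (permOf_ne_refl hBl) (contains_refl hc)⟩
      · exact ⟨permOf_grassmannian A, fun hc => hAc ((contains_permOf_iff hBl).1 hc)⟩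
  rw [hset]
  have hrefl_notmem : Equiv.refl (Fin n)
      ∉ permOf '' {A : Finset (Fin n) | ¬ LowerS A ∧ ¬ ContB A B} := by
    rintro ⟨A, ⟨hAl, _⟩, hA⟩
    exact permOf_ne_refl hAl hA
  rw [Set.ncard_insert_of_notMem hrefl_notmem]
  have hinj : Set.InjOn permOf {A : Finset (Fin n) | ¬ LowerS A ∧ ¬ ContB A B} := by
    intro A hA A' hA' h
    exact permOf_inj hA.1 hA'.1 h
  rw [Set.ncard_image_of_injOn hinj]
  -- count the sets A
  have hdiff : {A : Finset (Fin n) | ¬ LowerS A ∧ ¬ ContB A B}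
      = {A : Finset (Fin n) | ¬ ContB A B} \ {A : Finset (Fin n) | LowerS A} := by
    ext A
    simp only [Set.mem_setOf_eq, Set.mem_diff]
    tauto
  have hsub : {A : Finset (Fin n) | LowerS A} ⊆ {A : Finset (Fin n) | ¬ ContB A B} :=
    fun A hA => lower_not_contB hA hBl
  rw [hdiff, Set.ncard_diff hsub, ncard_avoiders B, ncard_lower]
  -- arithmetic
  have hsum : ∑ j ∈ Finset.range k, n.choose j
      = (n + 1) + ∑ j ∈ Finset.Icc 2 (k - 1), n.choose j := by
    have hIcc : Finset.Icc 2 (k - 1) = Finset.Ico 2 k := by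
      rw [← Finset.Ico_add_one_right_eq_Icc]
      congr 1
      omega
    rw [hIcc, Finset.range_eq_Ico,
      ← Finset.sum_Ico_consecutive (fun j => n.choose j) (by omega : 0 ≤ 2) (by omega : 2 ≤ k)]
    congr 1
    rw [← Finset.range_eq_Ico]
    simp [Finset.sum_range_succ, Nat.add_comm]
  omega
end

section
/- For k ≥ 2 and k ≤ m ≤ 2k−2, the number of Grassmannian permutations of {1,…,m} that avoid id_k equals Σ_{j=1}^{2k−m} (−1)^{j−1} · j · binom(2k−m−j, j) · C_{k−j}, where the sum is evaluated in ℤ and binom(a,b) = 0 when a < b. -/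
/-- `σ` avoids the identity pattern `id_k`: it has no increasing subsequence of
length `k`. -/
def AvoidsIdPat {m : ℕ} (k : ℕ) (σ : Equiv.Perm (Fin m)) : Prop :=
  ¬ ∃ f : Fin k → Fin m, StrictMono f ∧ StrictMono (fun i => σ (f i))

open Finset


lemma catalan_choose (n : ℕ) :
    (catalan n : ℤ) = (2*n).choose n - (2*n).choose (n+1) := by
  have h1 : (n + 1) * catalan n = (2*n).choose n := by
    rw [succ_mul_catalan_eq_centralBinom, Nat.centralBinom_eq_two_mul_choose]
  have h2 : (2*n).choose (n+1) * (n+1) = (2*n).choose n * n := by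
    have := Nat.choose_succ_right_eq (2*n) n
    simpa [two_mul, Nat.add_sub_cancel] using this
  have hne : ((n:ℤ) + 1) ≠ 0 := by positivity
  have : ((n:ℤ)+1) * (catalan n : ℤ) = ((n:ℤ)+1) * ((2*n).choose n - (2*n).choose (n+1)) := by
    push_cast [← h1]
    push_cast at h2 ⊢
    nlinarith [h2]
  exact mul_left_cancel₀ hne this

/-- B sum -/
noncomputable def Bsum (k r : ℕ) : ℤ :=
  ∑ j ∈ range (r+1), (-1 : ℤ)^j * ((r-j).choose j : ℤ) * (catalan (k-j) : ℤ)

lemma Bsum_rec (k r : ℕ) : Bsum k (r+2) = Bsum k (r+1) - Bsum (k-1) r := by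
  have pascal : ∀ j ≤ r+1, ((r+1-j).choose (j+1) : ℤ)
      = ((r-j).choose (j+1) : ℤ) + ((r-j).choose j : ℤ) := by
    intro j hj
    rcases Nat.lt_or_ge j (r+1) with h | h
    · have : r+1-j = (r-j)+1 := by omega
      rw [this, Nat.choose_succ_succ']
      push_cast; ring
    · have hj' : j = r+1 := by omega
      subst hj'
      simp
  have e1 : ∀ j ∈ range (r+2), (-1:ℤ)^(j+1) * (((r+2)-(j+1)).choose (j+1) : ℤ) * (catalan (k-(j+1)) : ℤ)
      = (-1:ℤ)^(j+1) * ((r-j).choose (j+1) : ℤ) * (catalan (k-1-j) : ℤ)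
        - (-1:ℤ)^j * ((r-j).choose j : ℤ) * (catalan (k-1-j) : ℤ) := by
    intro j hj
    simp only [mem_range] at hj
    have h1 : (r+2)-(j+1) = r+1-j := by omega
    have h2 : k-(j+1) = k-1-j := by omega
    rw [h1, h2, pascal j (by omega)]
    ring
  have lhs1 : Bsum k (r+2) =
      (∑ j ∈ range (r+2), (-1:ℤ)^(j+1) * ((r-j).choose (j+1) : ℤ) * (catalan (k-1-j) : ℤ))
      - (∑ j ∈ range (r+2), (-1:ℤ)^j * ((r-j).choose j : ℤ) * (catalan (k-1-j) : ℤ))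
      + (-1:ℤ)^0 * (((r+2)-0).choose 0 : ℤ) * (catalan (k-0) : ℤ) := by
    unfold Bsum
    rw [Finset.sum_range_succ' (fun j => (-1 : ℤ)^j * (((r+2)-j).choose j : ℤ) * (catalan (k-j) : ℤ)) (r+2)]
    rw [Finset.sum_congr rfl e1, Finset.sum_sub_distrib]
  have eB2 : ∑ j ∈ range (r+2), (-1:ℤ)^j * ((r-j).choose j : ℤ) * (catalan (k-1-j) : ℤ)
      = Bsum (k-1) r := by
    unfold Bsum
    rw [Finset.sum_range_succ]
    have : ((r-(r+1)).choose (r+1) : ℤ) = 0 := by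
      have : r-(r+1) = 0 := by omega
      simp [this]
    rw [this]
    ring
  have eB1 : (∑ j ∈ range (r+2), (-1:ℤ)^(j+1) * ((r-j).choose (j+1) : ℤ) * (catalan (k-1-j) : ℤ))
      + (-1:ℤ)^0 * (((r+2)-0).choose 0 : ℤ) * (catalan (k-0) : ℤ) = Bsum k (r+1) := by
    unfold Bsum
    rw [Finset.sum_range_succ' (fun j => (-1 : ℤ)^j * (((r+1)-j).choose j : ℤ) * (catalan (k-j) : ℤ)) (r+1)]
    simp only [Nat.choose_zero_right, pow_zero, Nat.sub_zero]
    have : ∀ j ∈ range (r+1), (-1:ℤ)^(j+1) * (((r+1)-(j+1)).choose (j+1) : ℤ) * (catalan (k-(j+1)) : ℤ)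
        = (-1:ℤ)^(j+1) * ((r-j).choose (j+1) : ℤ) * (catalan (k-1-j) : ℤ) := by
      intro j hj
      have h1 : (r+1)-(j+1) = r-j := by omega
      have h2 : k-(j+1) = k-1-j := by omega
      rw [h1, h2]
    rw [Finset.sum_congr rfl this]
    rw [Finset.sum_range_succ]
    have hz : ((r-(r+1)).choose (r+2) : ℤ) = 0 := by
      have : r-(r+1) = 0 := by omega
      simp [this]
    rw [hz]
    ring
  rw [lhs1, eB2]
  linarith [eB1]

lemma Bsum_closed : ∀ r k : ℕ, r ≤ k →
    Bsum k r = ((2*k-r).choose k : ℤ) - ((2*k-r).choose (k+1) : ℤ) := by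
  intro r
  induction r using Nat.strong_induction_on with
  | _ r ih =>
    match r with
    | 0 =>
      intro k hk
      unfold Bsum
      simpa using catalan_choose k
    | 1 =>
      intro k hk
      obtain ⟨k', rfl⟩ : ∃ k', k = k'+1 := ⟨k-1, by omega⟩
      unfold Bsum
      rw [Finset.sum_range_succ, Finset.sum_range_succ, Finset.sum_range_zero]
      have e : 2*(k'+1)-1 = 2*k'+1 := by omega
      have e2 : k'+1-1 = k' := by omega
      simp only [e, e2, Nat.sub_self, Nat.sub_zero, Nat.choose_zero_right]
      have hc := catalan_choose (k'+1)
      have hA : (2*(k'+1)).choose (k'+1) = (2*k'+1).choose k' + (2*k'+1).choose (k'+1) := by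
        rw [show 2*(k'+1) = (2*k'+1)+1 by ring, Nat.choose_succ_succ]
      have hB : (2*(k'+1)).choose (k'+1+1) = (2*k'+1).choose (k'+1) + (2*k'+1).choose (k'+2) := by
        rw [show 2*(k'+1) = (2*k'+1)+1 by ring, show k'+1+1 = (k'+1)+1 from rfl, Nat.choose_succ_succ]
      have hs : (2*k'+1).choose k' = (2*k'+1).choose (k'+1) := by
        rw [← Nat.choose_symm (show k'+1 ≤ 2*k'+1 by omega)]
        congr 1
        omega
      rw [hA, hB, hs] at hc
      simp only [Nat.choose_zero_succ] at *
      push_cast at hc ⊢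
      linarith [hc]
    | (r+2) =>
      intro k hk
      rw [Bsum_rec]
      have h1 := ih (r+1) (by omega) k (by omega)
      have h2 := ih r (by omega) (k-1) (by omega)
      rw [h1, h2]
      have e1 : 2*(k-1)-r = 2*k-(r+2) := by omega
      rw [e1]
      have hk2 : 2 ≤ k := by omega
      set m := 2*k-(r+2) with hm
      have e2 : 2*k-(r+1) = m+1 := by omega
      rw [e2]
      have e3 : k-1+1 = k := by omega
      have p1 : ((m+1).choose k : ℤ) = (m.choose k : ℤ) + (m.choose (k-1) : ℤ) := by
        have hh : k = (k-1)+1 := by omega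
        rw [hh, Nat.choose_succ_succ']
        push_cast; ring
      have p2 : ((m+1).choose (k+1) : ℤ) = (m.choose (k+1) : ℤ) + (m.choose k : ℤ) := by
        rw [Nat.choose_succ_succ']
        push_cast; ring
      rw [p1, p2, e3]
      ring

noncomputable def Asum (k r : ℕ) : ℤ :=
  ∑ j ∈ Icc 1 r, (-1 : ℤ)^(j-1) * (j : ℤ) * ((r-j).choose j : ℤ) * (catalan (k-j) : ℤ)

lemma Asum_range (k r : ℕ) : Asum k r
    = ∑ j ∈ range (r+1), (-1 : ℤ)^(j-1) * (j : ℤ) * ((r-j).choose j : ℤ) * (catalan (k-j) : ℤ) := by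
  have h : range (r+1) = insert 0 (Icc 1 r) := by
    ext x; simp [Finset.mem_range, Finset.mem_insert, Finset.mem_Icc]; omega
  rw [h, Finset.sum_insert (by simp)]
  simp [Asum]

lemma Asum_rec (k r : ℕ) :
    Asum k (r+2) = Asum k (r+1) - Asum (k-1) r + Bsum (k-1) r := by
  have pascal : ∀ j ≤ r+1, ((r+1-j).choose (j+1) : ℤ)
      = ((r-j).choose (j+1) : ℤ) + ((r-j).choose j : ℤ) := by
    intro j hj
    rcases Nat.lt_or_ge j (r+1) with h | h
    · have : r+1-j = (r-j)+1 := by omega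
      rw [this, Nat.choose_succ_succ']
      push_cast; ring
    · have hj' : j = r+1 := by omega
      subst hj'; simp
  rw [Asum_range, Asum_range, Asum_range]
  rw [Finset.sum_range_succ' (fun j => (-1 : ℤ)^(j-1) * (j:ℤ) * (((r+2)-j).choose j : ℤ) * (catalan (k-j) : ℤ)) (r+2)]
  have e1 : ∀ j ∈ range (r+2),
      (-1:ℤ)^((j+1)-1) * ((j:ℤ)+1) * (((r+2)-(j+1)).choose (j+1) : ℤ) * (catalan (k-(j+1)) : ℤ)
      = ((-1:ℤ)^j * ((j:ℤ)+1) * ((r-j).choose (j+1) : ℤ) * (catalan (k-1-j) : ℤ))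
        - ((-1:ℤ)^(j-1) * (j:ℤ) * ((r-j).choose j : ℤ) * (catalan (k-1-j) : ℤ))
        + ((-1:ℤ)^j * ((r-j).choose j : ℤ) * (catalan (k-1-j) : ℤ)) := by
    intro j hj
    simp only [mem_range] at hj
    have h1 : (r+2)-(j+1) = r+1-j := by omega
    have h2 : k-(j+1) = k-1-j := by omega
    have h3 : (j+1)-1 = j := by omega
    rw [h1, h2, h3, pascal j (by omega)]
    rcases j with _ | j
    · norm_num
      ring
    · have h4 : (j+1)-1 = j := by omega
      rw [h4]
      have : (-1:ℤ)^(j+1) = -(-1:ℤ)^j := by rw [pow_succ]; ring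
      rw [this]; ring
  have := Finset.sum_congr rfl e1
  push_cast at this ⊢
  rw [this]
  rw [Finset.sum_add_distrib, Finset.sum_sub_distrib]
  -- identify the three sums
  have eA1 : (∑ j ∈ range (r+2), (-1:ℤ)^j * ((j:ℤ)+1) * ((r-j).choose (j+1) : ℤ) * (catalan (k-1-j) : ℤ))
      + (-1:ℤ)^(0-1) * ((0:ℕ):ℤ) * (((r+2)-0).choose 0 : ℤ) * (catalan (k-0) : ℤ)
      = ∑ j ∈ range (r+2), (-1 : ℤ)^(j-1) * (j:ℤ) * (((r+1)-j).choose j : ℤ) * (catalan (k-j) : ℤ) := by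
    rw [Finset.sum_range_succ' (fun j => (-1 : ℤ)^(j-1) * (j:ℤ) * (((r+1)-j).choose j : ℤ) * (catalan (k-j) : ℤ)) (r+1)]
    have : ∀ j ∈ range (r+1),
        (-1:ℤ)^((j+1)-1) * ((j+1:ℕ):ℤ) * (((r+1)-(j+1)).choose (j+1) : ℤ) * (catalan (k-(j+1)) : ℤ)
        = (-1:ℤ)^j * ((j:ℤ)+1) * ((r-j).choose (j+1) : ℤ) * (catalan (k-1-j) : ℤ) := by
      intro j hj
      have h1 : (r+1)-(j+1) = r-j := by omega
      have h2 : k-(j+1) = k-1-j := by omega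
      have h3 : (j+1)-1 = j := by omega
      rw [h1, h2, h3]
      push_cast; ring
    rw [Finset.sum_congr rfl this]
    rw [Finset.sum_range_succ (fun j => (-1:ℤ)^j * ((j:ℤ)+1) * ((r-j).choose (j+1) : ℤ) * (catalan (k-1-j) : ℤ)) (r+1)]
    have hz : ((r-(r+1)).choose (r+2) : ℤ) = 0 := by
      have : r-(r+1) = 0 := by omega
      simp [this]
    rw [hz]
    push_cast
    ring
  have eA2 : ∑ j ∈ range (r+2), (-1:ℤ)^(j-1) * (j:ℤ) * ((r-j).choose j : ℤ) * (catalan (k-1-j) : ℤ)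
      = ∑ j ∈ range (r+1), (-1 : ℤ)^(j-1) * (j:ℤ) * ((r-j).choose j : ℤ) * (catalan (k-1-j) : ℤ) := by
    rw [Finset.sum_range_succ]
    have hz : ((r-(r+1)).choose (r+1) : ℤ) = 0 := by
      have : r-(r+1) = 0 := by omega
      simp [this]
    rw [hz]
    ring
  have eA3 : ∑ j ∈ range (r+2), (-1:ℤ)^j * ((r-j).choose j : ℤ) * (catalan (k-1-j) : ℤ)
      = Bsum (k-1) r := by
    unfold Bsum
    rw [Finset.sum_range_succ]
    have hz : ((r-(r+1)).choose (r+1) : ℤ) = 0 := by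
      have : r-(r+1) = 0 := by omega
      simp [this]
    rw [hz]
    have : ∀ j ∈ range (r+1), (-1:ℤ)^j * ((r-j).choose j : ℤ) * (catalan (k-1-j) : ℤ)
        = (-1:ℤ)^j * ((r-j).choose j : ℤ) * (catalan ((k-1)-j) : ℤ) := by
      intro j hj; rfl
    rw [Finset.sum_congr rfl this]
    ring
  have goal2 : ∀ j, catalan (k-1-j) = catalan ((k-1)-j) := fun j => rfl
  push_cast at eA1 eA2 eA3
  linarith [eA1, eA2, eA3]

lemma sum_Icc_bot {f : ℕ → ℤ} {a b : ℕ} (h : a ≤ b) :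
    ∑ d ∈ Icc a b, f d = f a + ∑ d ∈ Icc (a+1) b, f d := by
  have : Icc a b = insert a (Icc (a+1) b) := by
    ext x; simp [Finset.mem_Icc, Finset.mem_insert]; omega
  rw [this, Finset.sum_insert (by simp [Finset.mem_Icc])]

lemma sum_Icc_shift (f : ℕ → ℤ) (a b : ℕ) :
    ∑ d ∈ Icc (a+1) (b+1), f (d-1) = ∑ d ∈ Icc a b, f d := by
  rw [← Finset.map_add_right_Icc a b 1, Finset.sum_map]
  apply Finset.sum_congr rfl
  intro x hx
  simp [addRightEmbedding]

lemma pascal_int (n d : ℕ) (hn : 1 ≤ n) (hd : 1 ≤ d) :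
    ((n).choose d : ℤ) = ((n-1).choose d : ℤ) + ((n-1).choose (d-1) : ℤ) := by
  obtain ⟨n', rfl⟩ : ∃ n', n = n'+1 := ⟨n-1, by omega⟩
  obtain ⟨d', rfl⟩ : ∃ d', d = d'+1 := ⟨d-1, by omega⟩
  simp only [Nat.add_sub_cancel, Nat.choose_succ_succ']
  push_cast; ring

lemma Asum_closed : ∀ r k : ℕ, 2 ≤ r → r ≤ k →
    Asum k r = (∑ d ∈ Icc (k-r+1) (k-1), ((2*k-r).choose d : ℤ))
      - ((r:ℤ)-1) * ((2*k-r).choose k : ℤ) := by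
  intro r
  induction r using Nat.strong_induction_on with
  | _ r ih =>
    match r with
    | 0 => intro k h2 _; omega
    | 1 => intro k h2 _; omega
    | 2 =>
      intro k _ hk
      have h1 : Asum k 2 = (catalan (k-1) : ℤ) := by
        unfold Asum
        rw [show Finset.Icc 1 2 = {1, 2} by decide, Finset.sum_insert (by decide),
          Finset.sum_singleton]
        norm_num
      rw [h1]
      rw [show k-2+1 = k-1 by omega, Finset.Icc_self, Finset.sum_singleton]
      have hc := catalan_choose (k-1)
      rw [show 2*(k-1) = 2*k-2 by omega, show k-1+1 = k by omega] at hc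
      rw [hc]; ring
    | 3 =>
      intro k _ hk
      have h1 : Asum k 3 = 2 * (catalan (k-1) : ℤ) := by
        unfold Asum
        rw [show Finset.Icc 1 3 = {1, 2, 3} by decide, Finset.sum_insert (by decide),
          Finset.sum_insert (by decide), Finset.sum_singleton]
        norm_num
      rw [h1]
      rw [show k-3+1 = k-2 by omega]
      rw [show (Icc (k-2) (k-1)) = {k-2, k-1} by ext x; simp [Finset.mem_Icc]; omega,
        Finset.sum_insert (by simp [Finset.mem_Icc]; omega), Finset.sum_singleton]
      have hc := catalan_choose (k-1)
      rw [show 2*(k-1) = 2*k-2 by omega, show k-1+1 = k by omega] at hc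
      have pA : ((2*k-2).choose (k-1) : ℤ) = ((2*k-3).choose (k-2) : ℤ) + ((2*k-3).choose (k-1) : ℤ) := by
        have := pascal_int (2*k-2) (k-1) (by omega) (by omega)
        rw [show 2*k-2-1 = 2*k-3 by omega, show k-1-1 = k-2 by omega] at this
        linarith
      have pB : ((2*k-2).choose k : ℤ) = ((2*k-3).choose (k-1) : ℤ) + ((2*k-3).choose k : ℤ) := by
        have := pascal_int (2*k-2) k (by omega) (by omega)
        rw [show 2*k-2-1 = 2*k-3 by omega] at this
        linarith
      have pS : ((2*k-3).choose (k-2) : ℤ) = ((2*k-3).choose (k-1) : ℤ) := by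
        rw [show k-2 = (2*k-3) - (k-1) by omega, Nat.choose_symm (by omega)]
      rw [hc] at *
      push_cast at *
      linarith [pA, pB, pS]
    | (r+4) =>
      intro k _ hk
      have hrec := Asum_rec k (r+2)
      rw [show r+2+2 = r+4 from rfl] at hrec
      have h1 := ih (r+3) (by omega) k (by omega) (by omega)
      have h2 := ih (r+2) (by omega) (k-1) (by omega) (by omega)
      have h3 := Bsum_closed (r+2) (k-1) (by omega)
      rw [hrec, h1, h2, h3]
      -- abbreviations
      set m := 2*k-(r+4) with hm
      have em1 : 2*k-(r+3) = m+1 := by omega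
      have em2 : 2*(k-1)-(r+2) = m := by omega
      rw [em1, em2]
      set a := k-(r+4)+1 with ha
      have ha1 : 1 ≤ a := by omega
      have ea1 : k-(r+3)+1 = a+1 := by omega
      have ea2 : (k-1)-(r+2)+1 = a+1 := by omega
      rw [ea1, ea2, show k-1+1 = k by omega]
      have hk1 : (k-1)-1 = k-2 := by omega
      rw [hk1]
      -- Pascal on the binomial sum
      have pasc : ∑ d ∈ Icc (a+1) (k-1), ((m+1).choose d : ℤ)
          = (∑ d ∈ Icc (a+1) (k-1), (m.choose d : ℤ))
            + ∑ d ∈ Icc a (k-2), (m.choose d : ℤ) := by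
        have step : ∀ d ∈ Icc (a+1) (k-1), ((m+1).choose d : ℤ)
            = (m.choose d : ℤ) + (m.choose (d-1) : ℤ) := by
          intro d hd
          simp only [Finset.mem_Icc] at hd
          rw [show d = (d-1)+1 by omega, Nat.choose_succ_succ']
          rw [show d-1+1-1 = d-1 by omega]
          push_cast; ring
        rw [Finset.sum_congr rfl step, Finset.sum_add_distrib]
        congr 1
        rw [show k-1 = (k-2)+1 by omega]
        exact sum_Icc_shift (fun d => (m.choose d : ℤ)) a (k-2)
      have pk : ((m+1).choose k : ℤ) = (m.choose k : ℤ) + (m.choose (k-1) : ℤ) := by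
        rw [show k = (k-1)+1 by omega, Nat.choose_succ_succ']
        rw [show k-1+1-1 = k-1 by omega]
        push_cast; ring
      have split1 : ∑ d ∈ Icc a (k-1), (m.choose d : ℤ)
          = (m.choose a : ℤ) + ∑ d ∈ Icc (a+1) (k-1), (m.choose d : ℤ) :=
        sum_Icc_bot (by omega)
      have split2 : ∑ d ∈ Icc a (k-2), (m.choose d : ℤ)
          = (m.choose a : ℤ) + ∑ d ∈ Icc (a+1) (k-2), (m.choose d : ℤ) :=
        sum_Icc_bot (by omega)
      rw [pasc, pk, split1, split2]
      push_cast
      ring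

namespace GrassCount

open scoped Classical
variable {m : ℕ}

def lo (S : Finset (Fin m)) (v : ℕ) : ℕ := (S.filter (fun (x : Fin m) => (x : ℕ) < v)).card
def hi (S : Finset (Fin m)) (v : ℕ) : ℕ := (Sᶜ.filter (fun (x : Fin m) => v ≤ (x : ℕ))).card
def gf (S : Finset (Fin m)) (v : ℕ) : ℕ := lo S v + hi S v

lemma lo_zero (S : Finset (Fin m)) : lo S 0 = 0 := by simp [lo]

lemma lo_of_ge (S : Finset (Fin m)) {v : ℕ} (h : m ≤ v) : lo S v = S.card := by
  unfold lo
  rw [Finset.filter_true_of_mem (fun x _ => lt_of_lt_of_le x.isLt h)]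

lemma hi_of_ge (S : Finset (Fin m)) {v : ℕ} (h : m ≤ v) : hi S v = 0 := by
  unfold hi
  rw [Finset.card_eq_zero, Finset.filter_eq_empty_iff]
  intro x _
  have := x.isLt
  omega

lemma hi_zero (S : Finset (Fin m)) : hi S 0 = Sᶜ.card := by
  unfold hi
  rw [Finset.filter_true_of_mem (fun x _ => Nat.zero_le _)]

-- splitting filters at v
lemma lo_succ_mem {S : Finset (Fin m)} {v : ℕ} (hv : v < m) (hmem : ⟨v, hv⟩ ∈ S) :
    lo S (v+1) = lo S v + 1 := by
  unfold lo
  have hsplit : S.filter (fun (x : Fin m) => (x : ℕ) < v+1)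
      = (S.filter (fun (x : Fin m) => (x : ℕ) < v)) ∪ S.filter (fun (x : Fin m) => (x : ℕ) = v) := by
    ext x
    simp only [Finset.mem_filter, Finset.mem_union, ← and_or_left]
    exact and_congr_right fun _ => by omega
  have hsing : S.filter (fun (x : Fin m) => (x : ℕ) = v) = {⟨v, hv⟩} := by
    ext x
    simp only [Finset.mem_filter, Finset.mem_singleton]
    constructor
    · rintro ⟨hx, hxv⟩; exact Fin.ext hxv
    · rintro rfl; exact ⟨hmem, rfl⟩
  rw [hsplit, Finset.card_union_of_disjoint, hsing, Finset.card_singleton]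
  rw [Finset.disjoint_left]
  intro x hx hx'
  simp only [Finset.mem_filter] at hx hx'
  omega

lemma lo_succ_notmem {S : Finset (Fin m)} {v : ℕ} (hv : v < m) (hmem : ⟨v, hv⟩ ∉ S) :
    lo S (v+1) = lo S v := by
  unfold lo
  congr 1
  ext x
  simp only [Finset.mem_filter]
  constructor
  · rintro ⟨hx, hxv⟩
    refine ⟨hx, ?_⟩
    rcases Nat.lt_or_ge (x : ℕ) v with h | h
    · exact h
    · exfalso
      have : (x : ℕ) = v := by omega
      apply hmem
      have : x = ⟨v, hv⟩ := Fin.ext this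
      rwa [← this]
  · rintro ⟨hx, hxv⟩; exact ⟨hx, by omega⟩

lemma hi_succ_mem {S : Finset (Fin m)} {v : ℕ} (hv : v < m) (hmem : ⟨v, hv⟩ ∈ S) :
    hi S v = hi S (v+1) := by
  unfold hi
  congr 1
  ext x
  simp only [Finset.mem_filter]
  constructor
  · rintro ⟨hx, hxv⟩
    refine ⟨hx, ?_⟩
    rcases Nat.lt_or_ge v (x : ℕ) with h | h
    · omega
    · exfalso
      have hxv' : (x : ℕ) = v := by omega
      have : x = ⟨v, hv⟩ := Fin.ext hxv'
      rw [this] at hx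
      simp at hx
      exact hx hmem
  · rintro ⟨hx, hxv⟩; exact ⟨hx, by omega⟩

lemma hi_succ_notmem {S : Finset (Fin m)} {v : ℕ} (hv : v < m) (hmem : ⟨v, hv⟩ ∉ S) :
    hi S v = hi S (v+1) + 1 := by
  unfold hi
  have hsplit : Sᶜ.filter (fun (x : Fin m) => v ≤ (x : ℕ))
      = (Sᶜ.filter (fun (x : Fin m) => v+1 ≤ (x : ℕ))) ∪ Sᶜ.filter (fun (x : Fin m) => (x : ℕ) = v) := by
    ext x
    simp only [Finset.mem_filter, Finset.mem_union, ← and_or_left]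
    exact and_congr_right fun _ => by omega
  have hsing : Sᶜ.filter (fun (x : Fin m) => (x : ℕ) = v) = {⟨v, hv⟩} := by
    ext x
    simp only [Finset.mem_filter, Finset.mem_singleton, Finset.mem_compl]
    constructor
    · rintro ⟨hx, hxv⟩; exact Fin.ext hxv
    · rintro rfl; exact ⟨hmem, rfl⟩
  rw [hsplit, Finset.card_union_of_disjoint, hsing, Finset.card_singleton]
  rw [Finset.disjoint_left]
  intro x hx hx'
  simp only [Finset.mem_filter] at hx hx'
  omega

lemma lo_succ_le (S : Finset (Fin m)) (v : ℕ) : lo S (v+1) ≤ lo S v + 1 := by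
  rcases Nat.lt_or_ge v m with hv | hv
  · by_cases hmem : (⟨v, hv⟩ : Fin m) ∈ S
    · rw [lo_succ_mem hv hmem]
    · rw [lo_succ_notmem hv hmem]; omega
  · rw [lo_of_ge S (by omega), lo_of_ge S hv]; omega

lemma lo_le_card (S : Finset (Fin m)) (v : ℕ) : lo S v ≤ S.card :=
  Finset.card_le_card (Finset.filter_subset _ _)

-- the fundamental identity
lemma card_filter_univ_lt {v : ℕ} (hv : v ≤ m) :
    ((univ : Finset (Fin m)).filter (fun (x : Fin m) => (x : ℕ) < v)).card = v := by
  induction v with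
  | zero => simp
  | succ v ih =>
    have hv' : v < m := by omega
    have := lo_succ_mem (S := (univ : Finset (Fin m))) hv' (Finset.mem_univ _)
    unfold lo at this
    rw [this, ih (by omega)]

lemma key_identity (S : Finset (Fin m)) {v : ℕ} (hv : v ≤ m) :
    gf S v + v + S.card = 2 * lo S v + m := by
  unfold gf
  have h1 : (S.filter (fun (x : Fin m) => (x:ℕ) < v)).card + (S.filter (fun (x : Fin m) => ¬ ((x:ℕ) < v))).card = S.card :=
    Finset.card_filter_add_card_filter_not _
  have h2 : (Sᶜ.filter (fun (x : Fin m) => (x:ℕ) < v)).card + (Sᶜ.filter (fun (x : Fin m) => ¬ ((x:ℕ) < v))).card = Sᶜ.card :=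
    Finset.card_filter_add_card_filter_not _
  have h3 : S.card + Sᶜ.card = m := by
    rw [Finset.card_add_card_compl]
    simp
  have h4 : (S.filter (fun (x : Fin m) => (x:ℕ) < v)).card + (Sᶜ.filter (fun (x : Fin m) => (x:ℕ) < v)).card = v := by
    have h4a : (S.filter (fun (x : Fin m) => (x:ℕ) < v)).card + (Sᶜ.filter (fun (x : Fin m) => (x:ℕ) < v)).card
        = ((univ : Finset (Fin m)).filter (fun (x : Fin m) => (x:ℕ) < v)).card := by
      rw [← Finset.card_union_of_disjoint (Finset.disjoint_filter_filter disjoint_compl_right)]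
      congr 1
      rw [← Finset.filter_union, Finset.union_compl]
    rw [h4a, card_filter_univ_lt hv]
  have h5 : hi S v = (Sᶜ.filter (fun (x : Fin m) => ¬ ((x:ℕ) < v))).card := by
    unfold hi
    congr 1
    ext x
    simp only [Finset.mem_filter]
    exact and_congr_right fun _ => by omega
  have h6 : lo S v = (S.filter (fun (x : Fin m) => (x:ℕ) < v)).card := rfl
  omega


lemma lo_le_self (S : Finset (Fin m)) (v : ℕ) : lo S v ≤ v := by
  induction v with
  | zero => rw [lo_zero]
  | succ v ih => have := lo_succ_le S v; omega

def flip (t : ℕ) (S : Finset (Fin m)) : Finset (Fin m) :=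
  S.filter (fun (x : Fin m) => (x : ℕ) < t) ∪ Sᶜ.filter (fun (x : Fin m) => t ≤ (x : ℕ))

lemma mem_flip {t : ℕ} {S : Finset (Fin m)} {x : Fin m} :
    x ∈ flip t S ↔ (((x : ℕ) < t ∧ x ∈ S) ∨ (t ≤ (x : ℕ) ∧ x ∉ S)) := by
  simp only [flip, Finset.mem_union, Finset.mem_filter, Finset.mem_compl]
  tauto

lemma flip_flip (t : ℕ) (S : Finset (Fin m)) : flip t (flip t S) = S := by
  ext x
  simp only [mem_flip]
  by_cases h : (x : ℕ) < t <;> by_cases h2 : x ∈ S <;>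
    simp [h, h2, show ¬ ((x:ℕ) < t) → t ≤ (x:ℕ) from by omega] <;> omega

lemma lo_flip {t v : ℕ} (S : Finset (Fin m)) (hv : v ≤ t) : lo (flip t S) v = lo S v := by
  unfold lo
  congr 1
  ext x
  simp only [Finset.mem_filter, mem_flip]
  constructor
  · rintro ⟨h1 | h2, hxv⟩
    · exact ⟨h1.2, hxv⟩
    · omega
  · rintro ⟨hxS, hxv⟩
    exact ⟨Or.inl ⟨by omega, hxS⟩, hxv⟩

lemma card_flip (t : ℕ) (S : Finset (Fin m)) : (flip t S).card = lo S t + hi S t := by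
  unfold flip lo hi
  rw [Finset.card_union_of_disjoint]
  rw [Finset.disjoint_left]
  intro x hx hx'
  simp only [Finset.mem_filter] at hx hx'
  omega

noncomputable def phi (L : ℕ) (S : Finset (Fin m)) : Finset (Fin m) :=
  if h : ∃ v, v + L ≤ 2 * lo S v then flip (Nat.find h) S else S

lemma phi_of_ex {L : ℕ} {S : Finset (Fin m)} (h : ∃ v, v + L ≤ 2 * lo S v) :
    phi L S = flip (Nat.find h) S := dif_pos h

lemma find_eq {L : ℕ} {S : Finset (Fin m)} (hL : 1 ≤ L) (h : ∃ v, v + L ≤ 2 * lo S v) :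
    2 * lo S (Nat.find h) = Nat.find h + L := by
  have hspec := Nat.find_spec h
  have ht1 : 1 ≤ Nat.find h := by
    rcases Nat.eq_zero_or_pos (Nat.find h) with h0 | h0
    · exfalso
      rw [h0] at hspec
      rw [lo_zero] at hspec
      omega
    · exact h0
  have hmin : ¬ ((Nat.find h - 1) + L ≤ 2 * lo S (Nat.find h - 1)) := Nat.find_min h (by omega)
  have hstep : lo S (Nat.find h) ≤ lo S (Nat.find h - 1) + 1 := by
    have := lo_succ_le S (Nat.find h - 1)
    rw [show Nat.find h - 1 + 1 = Nat.find h by omega] at this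
    exact this
  have hmono : lo S (Nat.find h - 1) ≤ lo S (Nat.find h) := by
    apply Finset.card_le_card
    apply Finset.monotone_filter_right
    intro x hx
    omega
  omega

lemma phi_ex {L : ℕ} {S : Finset (Fin m)} (h : ∃ v, v + L ≤ 2 * lo S v) :
    ∃ v, v + L ≤ 2 * lo (phi L S) v := by
  refine ⟨Nat.find h, ?_⟩
  rw [phi_of_ex h, lo_flip S (le_refl _)]
  exact Nat.find_spec h

lemma phi_find {L : ℕ} {S : Finset (Fin m)} (h : ∃ v, v + L ≤ 2 * lo S v) :
    Nat.find (phi_ex h) = Nat.find h := by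
  rw [Nat.find_eq_iff]
  constructor
  · rw [phi_of_ex h, lo_flip S (le_refl _)]
    exact Nat.find_spec h
  · intro v hv
    rw [phi_of_ex h, lo_flip S (le_of_lt hv)]
    exact Nat.find_min h hv

lemma phi_phi {L : ℕ} {S : Finset (Fin m)} (h : ∃ v, v + L ≤ 2 * lo S v) :
    phi L (phi L S) = S := by
  rw [phi_of_ex (phi_ex h), phi_find h, phi_of_ex h, flip_flip]

lemma phi_card {L : ℕ} {S : Finset (Fin m)} (h : ∃ v, v + L ≤ 2 * lo S v) :
    (phi L S).card = gf S (Nat.find h) := by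
  rw [phi_of_ex h, card_flip]
  rfl

lemma card_bad {m k d : ℕ} (hk : k ≤ m) (hd1 : m < k + d) (hd2 : d < k) :
    ((Finset.powersetCard d (univ : Finset (Fin m))).filter
      (fun S => ¬ (∀ v ∈ range (m+1), gf S v < k))).card = m.choose k := by
  set L := k + d - m with hLdef
  have hL1 : 1 ≤ L := by omega
  rw [show m.choose k = (Finset.powersetCard k (univ : Finset (Fin m))).card by
    rw [Finset.card_powersetCard, Finset.card_univ, Fintype.card_fin]]
  apply Finset.card_bij' (fun S _ => phi L S) (fun S _ => phi L S)
  · -- forward: maps into powersetCard k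
    intro S hS
    simp only [Finset.mem_filter, Finset.mem_powersetCard_univ] at hS
    obtain ⟨hcard, hbad⟩ := hS
    push_neg at hbad
    obtain ⟨v0, hv0r, hv0⟩ := hbad
    simp only [Finset.mem_range] at hv0r
    have hv0m : v0 ≤ m := by omega
    have hki := key_identity S hv0m
    have hex : ∃ v, v + L ≤ 2 * lo S v := ⟨v0, by omega⟩
    have ht := find_eq hL1 hex
    have htm : Nat.find hex ≤ m := le_trans (Nat.find_min' hex (by omega)) hv0m
    have hki2 := key_identity S htm
    rw [Finset.mem_powersetCard_univ, phi_card hex]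
    omega
  · -- backward
    intro S hS
    rw [Finset.mem_powersetCard_univ] at hS
    have hex : ∃ v, v + L ≤ 2 * lo S v := ⟨m, by rw [lo_of_ge S (le_refl m)]; omega⟩
    have ht := find_eq hL1 hex
    have htm : Nat.find hex ≤ m := Nat.find_min' hex (by rw [lo_of_ge S (le_refl m)]; omega)
    have hki := key_identity S htm
    have hcard : (phi L S).card = d := by rw [phi_card hex]; omega
    simp only [Finset.mem_filter, Finset.mem_powersetCard_univ]
    refine ⟨hcard, ?_⟩
    intro hall
    have h1 := hall (Nat.find hex) (by simp only [Finset.mem_range]; omega)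
    have h2 := key_identity (phi L S) htm
    rw [phi_of_ex hex, lo_flip S (le_refl _)] at h2
    rw [phi_of_ex hex] at hcard h1
    omega
  · intro S hS
    simp only [Finset.mem_filter, Finset.mem_powersetCard_univ] at hS
    obtain ⟨hcard, hbad⟩ := hS
    push_neg at hbad
    obtain ⟨v0, hv0r, hv0⟩ := hbad
    simp only [Finset.mem_range] at hv0r
    have hki := key_identity S (show v0 ≤ m by omega)
    exact phi_phi ⟨v0, by omega⟩
  · intro S hS
    rw [Finset.mem_powersetCard_univ] at hS
    exact phi_phi ⟨m, by rw [lo_of_ge S (le_refl m)]; omega⟩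

lemma count_cond {m k : ℕ} (hk2 : 2 ≤ k) (hm1 : k ≤ m) (hm2 : m ≤ 2*k-2) :
    ((((univ : Finset (Finset (Fin m)))).filter
        (fun S => ∀ v ∈ range (m+1), gf S v < k)).card : ℤ)
      = ∑ d ∈ Icc (m-k+1) (k-1), ((m.choose d : ℤ) - (m.choose k : ℤ)) := by
  have hfib : (((univ : Finset (Finset (Fin m)))).filter
        (fun S => ∀ v ∈ range (m+1), gf S v < k)).card
      = ∑ d ∈ range (m+1),
        ((((univ : Finset (Finset (Fin m)))).filter
          (fun S => ∀ v ∈ range (m+1), gf S v < k)).filter (fun S => S.card = d)).card := by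
    apply Finset.card_eq_sum_card_fiberwise
    intro S _
    simp only [Finset.mem_coe, Finset.mem_range]
    have : S.card ≤ (univ : Finset (Fin m)).card := Finset.card_le_univ S
    rw [Finset.card_univ, Fintype.card_fin] at this
    omega
  rw [hfib]
  push_cast
  rw [← Finset.sum_subset (show Icc (m-k+1) (k-1) ⊆ range (m+1) by
    intro d hd; simp only [Finset.mem_Icc] at hd; simp only [Finset.mem_range]; omega)]
  · apply Finset.sum_congr rfl
    intro d hd
    simp only [Finset.mem_Icc] at hd
    have hd1 : m < k + d := by omega
    have hd2 : d < k := by omega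
    have hsplit : ((((univ : Finset (Finset (Fin m)))).filter
          (fun S => ∀ v ∈ range (m+1), gf S v < k)).filter (fun S => S.card = d))
        = (Finset.powersetCard d (univ : Finset (Fin m))).filter
          (fun S => ∀ v ∈ range (m+1), gf S v < k) := by
      ext S
      simp only [Finset.mem_filter, Finset.mem_powersetCard_univ, Finset.mem_univ, true_and]
      tauto
    rw [hsplit]
    have hpart := Finset.card_filter_add_card_filter_not
      (s := Finset.powersetCard d (univ : Finset (Fin m)))
      (p := fun S => ∀ v ∈ range (m+1), gf S v < k)
    rw [card_bad hm1 hd1 hd2] at hpart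
    have hcardp : (Finset.powersetCard d (univ : Finset (Fin m))).card = m.choose d := by
      rw [Finset.card_powersetCard, Finset.card_univ, Fintype.card_fin]
    rw [hcardp] at hpart
    push_cast [← hpart]
    ring
  · -- vanishing outside
    intro d hdr hdI
    simp only [Finset.mem_range] at hdr
    simp only [Finset.mem_Icc, not_and_or, not_le] at hdI
    rw [Nat.cast_eq_zero, Finset.card_eq_zero, Finset.filter_eq_empty_iff]
    intro S hS
    simp only [Finset.mem_filter, Finset.mem_univ, true_and] at hS
    intro hcard
    rcases hdI with hlow | hhigh
    · -- d ≤ m - k : gf S 0 = m - d ≥ k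
      have h0 := hS 0 (by simp)
      have : gf S 0 = Sᶜ.card := by
        unfold gf
        rw [lo_zero, hi_zero]
        omega
      rw [Finset.card_compl, Fintype.card_fin, hcard] at this
      omega
    · -- k ≤ d : gf S m = d
      have h0 := hS m (by simp)
      have : gf S m = S.card := by
        unfold gf
        rw [lo_of_ge S (le_refl m), hi_of_ge S (le_refl m)]
        omega
      rw [hcard] at this
      omega


lemma strictMono_of_adj {n : ℕ} {α : Type*} [Preorder α] (g : Fin n → α)
    (h : ∀ v : ℕ, ∀ hv : v+1 < n, g ⟨v, Nat.lt_of_succ_lt hv⟩ < g ⟨v+1, hv⟩) : StrictMono g := by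
  have key : ∀ j : ℕ, ∀ hj : j < n, ∀ i : ℕ, ∀ hi : i < j, g ⟨i, by omega⟩ < g ⟨j, hj⟩ := by
    intro j
    induction j with
    | zero => intro _ i hi; omega
    | succ j ih =>
      intro hj i hi
      rcases Nat.lt_or_ge i j with h2 | h2
      · exact lt_trans (ih (by omega) i h2) (h j hj)
      · have : i = j := by omega
        subst this
        exact h i hj
  intro a b hab
  have := key b.val b.isLt a.val hab
  simpa using this

lemma compl_card (S : Finset (Fin m)) : Sᶜ.card = m - S.card := by
  rw [Finset.card_compl, Fintype.card_fin]

def permFun (S : Finset (Fin m)) : Fin m → Fin m := fun i =>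
  if h : (i : ℕ) < S.card then S.orderEmbOfFin rfl ⟨(i : ℕ), h⟩
  else Sᶜ.orderEmbOfFin (compl_card S) ⟨(i : ℕ) - S.card, by have := i.isLt; omega⟩

lemma permFun_lt {S : Finset (Fin m)} {i : Fin m} (h : (i : ℕ) < S.card) :
    permFun S i = S.orderEmbOfFin rfl ⟨(i : ℕ), h⟩ := dif_pos h

lemma permFun_ge {S : Finset (Fin m)} {i : Fin m} (h : ¬ (i : ℕ) < S.card) :
    permFun S i = Sᶜ.orderEmbOfFin (compl_card S) ⟨(i : ℕ) - S.card, by have := i.isLt; omega⟩ :=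
  dif_neg h

lemma permFun_mem {S : Finset (Fin m)} {i : Fin m} :
    permFun S i ∈ S ↔ (i : ℕ) < S.card := by
  constructor
  · intro hmem
    by_contra h
    rw [permFun_ge h] at hmem
    have := Finset.orderEmbOfFin_mem Sᶜ (compl_card S) ⟨(i : ℕ) - S.card, by have := i.isLt; omega⟩
    rw [Finset.mem_compl] at this
    exact this hmem
  · intro h
    rw [permFun_lt h]
    exact Finset.orderEmbOfFin_mem S rfl _

lemma permFun_inj (S : Finset (Fin m)) : Function.Injective (permFun S) := by
  intro i j hij
  by_cases hi : (i : ℕ) < S.card <;> by_cases hj : (j : ℕ) < S.card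
  · rw [permFun_lt hi, permFun_lt hj] at hij
    have h2 := Fin.mk.inj ((S.orderEmbOfFin rfl).injective hij)
    exact Fin.ext h2
  · exfalso
    have h1 : permFun S i ∈ S := permFun_mem.mpr hi
    rw [hij] at h1
    exact hj (permFun_mem.mp h1)
  · exfalso
    have h1 : permFun S j ∈ S := permFun_mem.mpr hj
    rw [← hij] at h1
    exact hi (permFun_mem.mp h1)
  · rw [permFun_ge hi, permFun_ge hj] at hij
    have h2 := Fin.mk.inj ((Sᶜ.orderEmbOfFin (compl_card S)).injective hij)
    have := i.isLt
    have := j.isLt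
    exact Fin.ext (by omega)

noncomputable def permOf (S : Finset (Fin m)) : Equiv.Perm (Fin m) :=
  Equiv.ofBijective (permFun S) (Finite.injective_iff_bijective.mp (permFun_inj S))

lemma permOf_apply (S : Finset (Fin m)) (i : Fin m) : permOf S i = permFun S i := rfl

lemma permOf_mem {S : Finset (Fin m)} {i : Fin m} :
    permOf S i ∈ S ↔ (i : ℕ) < S.card := permFun_mem

lemma permOf_mono1 {S : Finset (Fin m)} {i j : Fin m} (hij : (i : ℕ) < (j : ℕ))
    (hj : (j : ℕ) < S.card) : permOf S i < permOf S j := by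
  have hi : (i : ℕ) < S.card := by omega
  rw [permOf_apply, permOf_apply, permFun_lt hi, permFun_lt hj]
  exact (S.orderEmbOfFin rfl).strictMono (by exact hij)

lemma permOf_mono2 {S : Finset (Fin m)} {i j : Fin m} (hij : (i : ℕ) < (j : ℕ))
    (hi : S.card ≤ (i : ℕ)) : permOf S i < permOf S j := by
  have hj : ¬ (j : ℕ) < S.card := by omega
  rw [permOf_apply, permOf_apply, permFun_ge (by omega), permFun_ge hj]
  apply (Sᶜ.orderEmbOfFin (compl_card S)).strictMono
  show (i : ℕ) - S.card < (j : ℕ) - S.card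
  omega

lemma isGrass (S : Finset (Fin m)) : IsGrassmannian (permOf S) := by
  intro a ha b hb
  simp only [Set.mem_setOf_eq] at ha hb
  obtain ⟨hA, ha⟩ := ha
  obtain ⟨hB, hb⟩ := hb
  have key : ∀ c : ℕ, ∀ hc : c + 1 < m,
      permOf S ⟨c+1, hc⟩ < permOf S ⟨c, Nat.lt_of_succ_lt hc⟩ → c + 1 = S.card := by
    intro c hc hlt
    by_contra hne
    rcases Nat.lt_or_ge (c+1) S.card with h1 | h1
    · exact absurd hlt (lt_asymm (permOf_mono1 (by simp) h1))
    · have h2 : S.card ≤ c := by omega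
      exact absurd hlt (lt_asymm (permOf_mono2 (by simp) h2))
  have h1 := key a hA ha
  have h2 := key b hB hb
  omega

lemma pattern_of_gf {S : Finset (Fin m)} {k v : ℕ} (hv : v ≤ m) (hge : k ≤ gf S v) :
    ∃ f : Fin k → Fin m, StrictMono f ∧ StrictMono (fun i => permOf S (f i)) := by
  set σ := permOf S with hσ
  set Q1 : Finset (Fin m) := (S.filter (fun (x : Fin m) => (x:ℕ) < v)).image σ.symm with hQ1
  set Q2 : Finset (Fin m) := (Sᶜ.filter (fun (x : Fin m) => v ≤ (x:ℕ))).image σ.symm with hQ2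
  have hm1 : ∀ x : Fin m, x ∈ Q1 ↔ (σ x ∈ S ∧ (σ x : ℕ) < v) := by
    intro x
    rw [hQ1]
    simp only [Finset.mem_image, Finset.mem_filter]
    constructor
    · rintro ⟨y, ⟨hy1, hy2⟩, rfl⟩
      rw [Equiv.apply_symm_apply]
      exact ⟨hy1, hy2⟩
    · rintro ⟨h1, h2⟩
      exact ⟨σ x, ⟨h1, h2⟩, by simp⟩
  have hm2 : ∀ x : Fin m, x ∈ Q2 ↔ (σ x ∉ S ∧ v ≤ (σ x : ℕ)) := by
    intro x
    rw [hQ2]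
    simp only [Finset.mem_image, Finset.mem_filter, Finset.mem_compl]
    constructor
    · rintro ⟨y, ⟨hy1, hy2⟩, rfl⟩
      rw [Equiv.apply_symm_apply]
      exact ⟨hy1, hy2⟩
    · rintro ⟨h1, h2⟩
      exact ⟨σ x, ⟨h1, h2⟩, by simp⟩
  have hdisj : Disjoint Q1 Q2 := by
    rw [Finset.disjoint_left]
    intro x hx1 hx2
    exact ((hm2 x).mp hx2).1 ((hm1 x).mp hx1).1
  have hcards : (Q1 ∪ Q2).card = gf S v := by
    rw [Finset.card_union_of_disjoint hdisj, hQ1, hQ2,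
      Finset.card_image_of_injective _ σ.symm.injective,
      Finset.card_image_of_injective _ σ.symm.injective]
    rfl
  have hmono : ∀ x ∈ Q1 ∪ Q2, ∀ y ∈ Q1 ∪ Q2, x < y → σ x < σ y := by
    intro x hx y hy hxy
    have hxy' : (x : ℕ) < (y : ℕ) := hxy
    rcases Finset.mem_union.mp hx with hx1 | hx2 <;> rcases Finset.mem_union.mp hy with hy1 | hy2
    · obtain ⟨hyS, _⟩ := (hm1 y).mp hy1
      exact permOf_mono1 hxy' (permOf_mem.mp hyS)
    · obtain ⟨_, hx2'⟩ := (hm1 x).mp hx1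
      obtain ⟨_, hy2'⟩ := (hm2 y).mp hy2
      exact Fin.lt_def.mpr (by omega)
    · exfalso
      obtain ⟨hxS, _⟩ := (hm2 x).mp hx2
      obtain ⟨hyS, _⟩ := (hm1 y).mp hy1
      have h1 : ¬ (x : ℕ) < S.card := fun hc => hxS (permOf_mem.mpr hc)
      have h2 : (y : ℕ) < S.card := permOf_mem.mp hyS
      omega
    · obtain ⟨hxS, _⟩ := (hm2 x).mp hx2
      have h1 : ¬ (x : ℕ) < S.card := fun hc => hxS (permOf_mem.mpr hc)
      exact permOf_mono2 hxy' (by omega)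
  obtain ⟨P', hP'sub, hP'card⟩ := Finset.exists_subset_card_eq (s := Q1 ∪ Q2) (n := k) (by omega)
  refine ⟨P'.orderEmbOfFin hP'card, (P'.orderEmbOfFin hP'card).strictMono, ?_⟩
  intro a b hab
  exact hmono _ (hP'sub (Finset.orderEmbOfFin_mem P' hP'card a))
    _ (hP'sub (Finset.orderEmbOfFin_mem P' hP'card b))
    ((P'.orderEmbOfFin hP'card).strictMono hab)

lemma gf_of_pattern {S : Finset (Fin m)} {k : ℕ}
    (hpat : ∃ f : Fin k → Fin m, StrictMono f ∧ StrictMono (fun i => permOf S (f i))) :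
    ∃ v, v ≤ m ∧ k ≤ gf S v := by
  obtain ⟨f, hf, hsf⟩ := hpat
  set σ := permOf S with hσ
  set F : Finset (Fin k) := univ.filter (fun i => (f i : ℕ) < S.card) with hF
  by_cases hFne : F.Nonempty
  · set j := F.max' hFne with hj
    have hjF : j ∈ F := F.max'_mem hFne
    have hjlt : (f j : ℕ) < S.card := (Finset.mem_filter.mp hjF).2
    set v := (σ (f j) : ℕ) + 1 with hv
    have hvm : v ≤ m := (σ (f j)).isLt
    refine ⟨v, hvm, ?_⟩
    have hlosub : (univ.filter (fun i : Fin k => (i:ℕ) < (j:ℕ)+1)).image (fun i => σ (f i))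
        ⊆ S.filter (fun (x : Fin m) => (x:ℕ) < v) := by
      intro x hx
      obtain ⟨i, hi, rfl⟩ := Finset.mem_image.mp hx
      have hij : i ≤ j := by
        have := (Finset.mem_filter.mp hi).2
        exact Fin.le_def.mpr (by omega)
      have hfi : (f i : ℕ) < S.card := by
        have := hf.monotone hij
        have : (f i : ℕ) ≤ (f j : ℕ) := this
        omega
      refine Finset.mem_filter.mpr ⟨permOf_mem.mpr hfi, ?_⟩
      have := hsf.monotone hij
      have h2 : (σ (f i) : ℕ) ≤ (σ (f j) : ℕ) := this
      omega
    have hhisub : (univ.filter (fun i : Fin k => ¬ ((i:ℕ) < (j:ℕ)+1))).image (fun i => σ (f i))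
        ⊆ Sᶜ.filter (fun (x : Fin m) => v ≤ (x:ℕ)) := by
      intro x hx
      obtain ⟨i, hi, rfl⟩ := Finset.mem_image.mp hx
      have hij : j < i := by
        have := (Finset.mem_filter.mp hi).2
        exact Fin.lt_def.mpr (by omega)
      have hiF : i ∉ F := by
        intro hc
        have := F.le_max' i hc
        rw [← hj] at this
        exact absurd (lt_of_lt_of_le hij this) (lt_irrefl j)
      have hfi : ¬ (f i : ℕ) < S.card := by
        intro hc
        exact hiF (Finset.mem_filter.mpr ⟨Finset.mem_univ i, hc⟩)
      refine Finset.mem_filter.mpr ⟨?_, ?_⟩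
      · rw [Finset.mem_compl]
        intro hc
        exact hfi (permOf_mem.mp hc)
      · have := hsf hij
        have h2 : (σ (f j) : ℕ) < (σ (f i) : ℕ) := this
        omega
    have hinj : Function.Injective (fun i : Fin k => σ (f i)) := hsf.injective
    have hc1 : ((univ.filter (fun i : Fin k => (i:ℕ) < (j:ℕ)+1)).image (fun i => σ (f i))).card
        = (j : ℕ) + 1 := by
      rw [Finset.card_image_of_injective _ hinj, card_filter_univ_lt (by omega)]
    have hc2 : ((univ.filter (fun i : Fin k => ¬ ((i:ℕ) < (j:ℕ)+1))).image (fun i => σ (f i))).card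
        = k - ((j : ℕ) + 1) := by
      rw [Finset.card_image_of_injective _ hinj]
      have := Finset.card_filter_add_card_filter_not
        (s := (univ : Finset (Fin k))) (p := fun i : Fin k => (i:ℕ) < (j:ℕ)+1)
      rw [card_filter_univ_lt (m := k) (by omega)] at this
      rw [Finset.card_univ, Fintype.card_fin] at this
      omega
    have hlo : (j:ℕ)+1 ≤ lo S v := by
      rw [← hc1]
      exact Finset.card_le_card hlosub
    have hhi : k - ((j:ℕ)+1) ≤ hi S v := by
      rw [← hc2]
      exact Finset.card_le_card hhisub
    have hjk : (j : ℕ) < k := j.isLt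
    unfold gf
    omega
  · refine ⟨0, Nat.zero_le m, ?_⟩
    have hsub : (univ : Finset (Fin k)).image (fun i => σ (f i))
        ⊆ Sᶜ.filter (fun (x : Fin m) => 0 ≤ (x:ℕ)) := by
      intro x hx
      obtain ⟨i, _, rfl⟩ := Finset.mem_image.mp hx
      have hiF : (f i : ℕ) < S.card → False := by
        intro hc
        exact hFne ⟨i, Finset.mem_filter.mpr ⟨Finset.mem_univ i, hc⟩⟩
      refine Finset.mem_filter.mpr ⟨?_, Nat.zero_le _⟩
      rw [Finset.mem_compl]
      intro hc
      exact hiF (permOf_mem.mp hc)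
    have hcard : ((univ : Finset (Fin k)).image (fun i => σ (f i))).card = k := by
      rw [Finset.card_image_of_injective _ hsf.injective, Finset.card_univ, Fintype.card_fin]
    have := Finset.card_le_card hsub
    rw [hcard] at this
    unfold gf hi
    omega

lemma perm_le_self {σ : Equiv.Perm (Fin m)} (h : StrictMono ⇑σ) (i : Fin m) : i ≤ σ i := by
  have key : ∀ v : ℕ, ∀ hv : v < m, v ≤ (σ ⟨v, hv⟩ : ℕ) := by
    intro v
    induction v with
    | zero => intro _; exact Nat.zero_le _
    | succ v ih =>
      intro hv
      have h1 := ih (by omega)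
      have h2 : σ ⟨v, by omega⟩ < σ ⟨v+1, hv⟩ := h (by exact Nat.lt_succ_self v)
      have h3 : (σ ⟨v, by omega⟩ : ℕ) < (σ ⟨v+1, hv⟩ : ℕ) := h2
      omega
  have := key i.val i.isLt
  exact Fin.le_def.mpr (by simpa using this)

lemma perm_id_of_strictMono {σ : Equiv.Perm (Fin m)} (h : StrictMono ⇑σ) : σ = 1 := by
  have hsymm : StrictMono ⇑σ.symm := by
    intro a b hab
    rcases lt_trichotomy (σ.symm a) (σ.symm b) with hc | hc | hc
    · exact hc
    · exact absurd (show a = b by simpa using congrArg σ hc) (ne_of_lt hab)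
    · exact absurd (show b < a by simpa using h hc) (not_lt.mpr (le_of_lt hab))
  apply Equiv.ext
  intro i
  have h1 : i ≤ σ i := perm_le_self h i
  have h2 : σ i ≤ i := by
    have := perm_le_self hsymm (σ i)
    simpa using this
  exact le_antisymm h2 h1

lemma gf_card_of_id {S : Finset (Fin m)} (h1 : permOf S = 1) : gf S S.card = m := by
  have hmem : ∀ i : Fin m, i ∈ S ↔ (i:ℕ) < S.card := by
    intro i
    have := permOf_mem (S := S) (i := i)
    rw [h1] at this
    simpa using this
  have hlo : lo S S.card = S.card := by
    unfold lo
    rw [Finset.filter_true_of_mem (fun x hx => (hmem x).mp hx)]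
  have hhi : hi S S.card = Sᶜ.card := by
    unfold hi
    rw [Finset.filter_true_of_mem]
    intro x hx
    rw [Finset.mem_compl] at hx
    have h2 : ¬ (x:ℕ) < S.card := fun hc => hx ((hmem x).mpr hc)
    omega
  have hcc := compl_card S
  have hle : S.card ≤ m := by
    have := Finset.card_le_univ S
    simpa using this
  unfold gf
  omega

lemma exists_permOf {σ : Equiv.Perm (Fin m)} (hG : IsGrassmannian σ) (hne : σ ≠ 1) :
    ∃ S : Finset (Fin m), σ = permOf S := by
  -- there is a descent
  have hdes : ∃ i : ℕ, ∃ h : i + 1 < m, σ ⟨i+1, h⟩ < σ ⟨i, Nat.lt_of_succ_lt h⟩ := by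
    by_contra hno
    push_neg at hno
    apply hne
    apply perm_id_of_strictMono
    apply strictMono_of_adj
    intro v hv
    have h1 := hno v hv
    have h2 : σ ⟨v, Nat.lt_of_succ_lt hv⟩ ≠ σ ⟨v+1, hv⟩ := by
      intro hc
      have := σ.injective hc
      have := Fin.mk.inj this
      omega
    rcases lt_trichotomy (σ ⟨v, Nat.lt_of_succ_lt hv⟩) (σ ⟨v+1, hv⟩) with hc | hc | hc
    · exact hc
    · exact absurd hc h2
    · exact absurd hc (not_lt.mpr h1)
  obtain ⟨i0, h0, hdes0⟩ := hdes
  have huniq : ∀ i : ℕ, ∀ h : i + 1 < m, σ ⟨i+1, h⟩ < σ ⟨i, Nat.lt_of_succ_lt h⟩ → i = i0 := by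
    intro i h hlt
    exact hG ⟨h, hlt⟩ ⟨h0, hdes0⟩
  have hinc : ∀ v : ℕ, ∀ hv : v + 1 < m, v ≠ i0 →
      σ ⟨v, Nat.lt_of_succ_lt hv⟩ < σ ⟨v+1, hv⟩ := by
    intro v hv hne0
    have h2 : σ ⟨v, Nat.lt_of_succ_lt hv⟩ ≠ σ ⟨v+1, hv⟩ := by
      intro hc
      have := σ.injective hc
      have := Fin.mk.inj this
      omega
    rcases lt_trichotomy (σ ⟨v, Nat.lt_of_succ_lt hv⟩) (σ ⟨v+1, hv⟩) with hc | hc | hc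
    · exact hc
    · exact absurd hc h2
    · exact absurd (huniq v hv hc) hne0
  set c := i0 + 1 with hc
  have hcm : c < m := h0
  set S : Finset (Fin m) := (univ.filter (fun x : Fin m => (x:ℕ) < c)).image σ with hS
  have hScard : S.card = c := by
    rw [hS, Finset.card_image_of_injective _ σ.injective, card_filter_univ_lt (by omega)]
  have hSc' : S.card = i0 + 1 := by rw [hScard]
  have hmemS : ∀ x : Fin m, σ x ∈ S ↔ (x:ℕ) < c := by
    intro x
    rw [hS]
    simp only [Finset.mem_image, Finset.mem_filter, Finset.mem_univ, true_and]
    constructor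
    · rintro ⟨y, hy, hyx⟩
      have := σ.injective hyx
      rwa [← this]
    · intro h
      exact ⟨x, h, rfl⟩
  -- block 1
  set f1 : Fin S.card → Fin m := fun jj => σ ⟨jj.val, by have := jj.isLt; omega⟩ with hf1
  have hf1mem : ∀ jj, f1 jj ∈ S := by
    intro jj
    rw [hf1]
    apply (hmemS _).mpr
    have := jj.isLt
    simp only
    omega
  have hf1mono : StrictMono f1 := by
    apply strictMono_of_adj
    intro v hv
    have hvm : v + 1 < m := by omega
    exact hinc v hvm (by omega)
  have hu1 := Finset.orderEmbOfFin_unique (rfl : S.card = S.card) hf1mem hf1mono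
  -- block 2
  set f2 : Fin (m - S.card) → Fin m := fun jj => σ ⟨jj.val + S.card, by have := jj.isLt; omega⟩ with hf2
  have hf2mem : ∀ jj, f2 jj ∈ Sᶜ := by
    intro jj
    rw [hf2, Finset.mem_compl]
    simp only
    intro hcon
    have h3 := (hmemS _).mp hcon
    have h4 : (jj : ℕ) + S.card < c := h3
    omega
  have hf2mono : StrictMono f2 := by
    apply strictMono_of_adj
    intro v hv
    have hvm : v + S.card + 1 < m := by omega
    have hstep := hinc (v + S.card) hvm (by omega)
    have heq : (⟨v + S.card + 1, hvm⟩ : Fin m) = ⟨(v+1) + S.card, by omega⟩ :=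
      Fin.ext (show v + S.card + 1 = (v+1) + S.card by omega)
    rw [heq] at hstep
    exact hstep
  have hu2 := Finset.orderEmbOfFin_unique (compl_card S) hf2mem hf2mono
  refine ⟨S, ?_⟩
  apply Equiv.ext
  intro x
  rw [permOf_apply]
  by_cases hx : (x : ℕ) < S.card
  · rw [permFun_lt hx, ← hu1, hf1]
  · rw [permFun_ge hx, ← hu2, hf2]
    apply congrArg σ
    apply Fin.ext
    show (x : ℕ) = (x : ℕ) - S.card + S.card
    omega

lemma permOf_image_lt (S : Finset (Fin m)) :
    (univ.filter (fun i : Fin m => (i:ℕ) < S.card)).image ⇑(permOf S) = S := by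
  ext x
  simp only [Finset.mem_image, Finset.mem_filter, Finset.mem_univ, true_and]
  constructor
  · rintro ⟨i, hi, rfl⟩
    exact permOf_mem.mpr hi
  · intro hx
    refine ⟨(permOf S).symm x, ?_, by simp⟩
    apply permOf_mem.mp
    rw [Equiv.apply_symm_apply]
    exact hx

lemma permOf_inj_aux {k : ℕ} (hkm : k ≤ m) {S T : Finset (Fin m)}
    (hSg : ∀ v ∈ range (m+1), gf S v < k) (hST : permOf S = permOf T)
    (hle : S.card ≤ T.card) : S = T := by
  rcases eq_or_lt_of_le hle with heq | hlt
  · rw [← permOf_image_lt S, ← permOf_image_lt T, hST, heq]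
  · exfalso
    have hmono : StrictMono ⇑(permOf S) := by
      apply strictMono_of_adj
      intro v hv
      rcases Nat.lt_or_ge (v+1) T.card with hcase | hcase
      · rw [hST]
        apply permOf_mono1
        · show v < v + 1
          omega
        · show v + 1 < T.card
          exact hcase
      · apply permOf_mono2
        · show v < v + 1
          omega
        · show S.card ≤ v
          omega
    have hid := perm_id_of_strictMono hmono
    have := gf_card_of_id hid
    have hle2 : S.card ≤ m := by
      have := Finset.card_le_univ S
      simpa using this
    have := hSg S.card (Finset.mem_range.mpr (by omega))
    omega


end GrassCount

/-- For `k ≥ 2` and `k ≤ m ≤ 2k−2`, the number of Grassmannian permutations of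
`{1,…,m}` avoiding `id_k` equals
`Σ_{j=1}^{2k−m} (−1)^{j−1} · j · binom(2k−m−j, j) · C_{k−j}` (evaluated in ℤ). -/
theorem count_grassmannian_avoiding_identity (k m : ℕ) (hk : 2 ≤ k)
    (hm1 : k ≤ m) (hm2 : m ≤ 2 * k - 2) :
    ({σ : Equiv.Perm (Fin m) | IsGrassmannian σ ∧ AvoidsIdPat k σ}.ncard : ℤ) =
      ∑ j ∈ Finset.Icc 1 (2 * k - m),
        (-1 : ℤ) ^ (j - 1) * (j : ℤ) * ((2 * k - m - j).choose j : ℤ) *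
          (catalan (k - j) : ℤ) := by
  classical
  have hset : {σ : Equiv.Perm (Fin m) | IsGrassmannian σ ∧ AvoidsIdPat k σ}
      = ↑((Finset.univ.filter
          (fun S : Finset (Fin m) => ∀ v ∈ Finset.range (m+1), GrassCount.gf S v < k)).image
            GrassCount.permOf) := by
    ext σ
    simp only [Set.mem_setOf_eq, Finset.coe_image, Set.mem_image, Finset.mem_coe,
      Finset.mem_filter, Finset.mem_univ, true_and]
    constructor
    · rintro ⟨hG, hA⟩
      have hne : σ ≠ 1 := by
        rintro rfl
        apply hA
        refine ⟨fun i : Fin k => ⟨i.val, lt_of_lt_of_le i.isLt hm1⟩, ?_, ?_⟩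
        · intro a b hab
          exact hab
        · intro a b hab
          simp only [Equiv.Perm.one_apply]
          exact hab
      obtain ⟨S, rfl⟩ := GrassCount.exists_permOf hG hne
      refine ⟨S, ?_, rfl⟩
      intro v hv
      by_contra hge
      apply hA
      exact GrassCount.pattern_of_gf (v := v)
        (by have := Finset.mem_range.mp hv; omega) (by omega)
    · rintro ⟨S, hgood, rfl⟩
      refine ⟨GrassCount.isGrass S, ?_⟩
      intro hpat
      obtain ⟨v, hvm, hvk⟩ := GrassCount.gf_of_pattern hpat
      have := hgood v (Finset.mem_range.mpr (by omega))
      omega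
  rw [hset, Set.ncard_coe_finset]
  rw [Finset.card_image_of_injOn (fun S hS T hT hST => by
    simp only [Finset.coe_filter, Set.mem_setOf_eq, Finset.mem_univ, true_and] at hS hT
    rcases le_total S.card T.card with hle | hle
    · exact GrassCount.permOf_inj_aux hm1 hS hST hle
    · exact (GrassCount.permOf_inj_aux hm1 hT hST.symm hle).symm)]
  rw [GrassCount.count_cond hk hm1 hm2]
  have h2 := Asum_closed (2*k - m) k (by omega) (by omega)
  have e1 : k - (2*k - m) + 1 = m - k + 1 := by omega
  have e2 : 2*k - (2*k - m) = m := by omega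
  rw [e1, e2] at h2
  rw [show (∑ j ∈ Finset.Icc 1 (2*k-m),
      (-1:ℤ)^(j-1) * (j:ℤ) * ((2*k - m - j).choose j : ℤ) * (catalan (k-j):ℤ))
      = Asum k (2*k-m) from rfl]
  rw [h2, Finset.sum_sub_distrib, Finset.sum_const, Nat.card_Icc]
  have e3 : (k-1+1) - (m-k+1) = 2*k - m - 1 := by omega
  rw [e3]
  have e4 : ((2*k - m - 1 : ℕ) : ℤ) = ((2*k - m : ℕ) : ℤ) - 1 := by omega
  rw [nsmul_eq_mul, e4]
end

section
/- For every integer n ≥ 0, Σ_{j=0}^{n} (−1)^j · binom(n+1, n−j) · binom(n+j+1, j) = (−1)^n. -/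
/-! Negating the upper index turns `(-1)^j * binom(b+j, j)` into the generalized binomial
coefficient `binom(-b-1, j)`, so the sum is a Chu–Vandermonde convolution and equals
`binom(a-b-1, n)`; for `a = b = n+1` this is `binom(-1, n) = (-1)^n`. -/

open Finset

section BinomialRing

variable {R : Type*} [Ring R] [BinomialRing R]

theorem Ring.choose_neg_natCast_sub_one (b j : ℕ) :
    Ring.choose (-(b : R) - 1) j = (-1) ^ j * ((b + j).choose j : R) := by
  rw [← neg_add', Ring.choose_neg, Units.smul_def, zsmul_eq_mul, Int.cast_negOnePow_natCast,
    show (b : R) + 1 + j - 1 = (b + j : ℕ) by push_cast; abel, Ring.choose_natCast]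

theorem Ring.choose_neg_one (n : ℕ) : Ring.choose (-1 : R) n = (-1) ^ n := by
  simpa using Ring.choose_neg_natCast_sub_one (R := R) 0 n

theorem sum_neg_one_pow_mul_choose_mul_choose_add (a b n : ℕ) :
    ∑ j ∈ range (n + 1), (-1 : R) ^ j * (a.choose (n - j) : R) * ((b + j).choose j : R) =
      Ring.choose ((a : R) - b - 1) n := by
  rw [show (a : R) - b - 1 = a + (-(b : R) - 1) by abel,
    Ring.add_choose_eq n (Nat.cast_commute a _), ← Nat.sum_antidiagonal_swap]
  simp only [Prod.fst_swap, Prod.snd_swap]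
  rw [Nat.sum_antidiagonal_eq_sum_range_succ (fun j i => Ring.choose (a : R) i * Ring.choose _ j)]
  refine sum_congr rfl fun j _ => ?_
  rw [Ring.choose_natCast, Ring.choose_neg_natCast_sub_one,
    ((Commute.neg_one_left _).pow_left j).eq, mul_assoc]

end BinomialRing

/-- For every `n ≥ 0`,
`Σ_{j=0}^{n} (−1)^j · binom(n+1, n−j) · binom(n+j+1, j) = (−1)^n` in ℤ. -/
theorem alternating_binomial_identity (n : ℕ) :
    ∑ j ∈ Finset.range (n + 1),
        (-1 : ℤ) ^ j * ((n + 1).choose (n - j) : ℤ) * ((n + j + 1).choose j : ℤ) =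
      (-1 : ℤ) ^ n := by
  have h := sum_neg_one_pow_mul_choose_mul_choose_add (R := ℤ) (n + 1) (n + 1) n
  simp only [add_right_comm n 1] at h
  rw [h, show ((n + 1 : ℕ) : ℤ) - (n + 1 : ℕ) - 1 = -1 by push_cast; ring, Ring.choose_neg_one]
end

section
/- For integers 0 ≤ b ≤ a, T(a,b) = Σ_{j=0}^{a−b} (−1)^j · binom(a−b−j, j) · C_{a−j}, evaluated in ℤ, where binom(x,y) = 0 when x < y. -/
/-!
Write `a = b + m`. As functions of `(b, m)`, both sides satisfy
`F(b, m + 2) = F(b + 1, m + 1) - F(b + 1, m)`: for the ballot numbers this is the Pascal rule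
`T(n+1, k+1) = T(n+1, k) + T(n, k+1)`, for the sum it is Pascal's rule applied to `binom(m - j, j)`.
The initial values agree, since `T(n, n) = C_n` and, because `T(n, n+1) = 0`, `T(n+1, n) = C_{n+1}`.
-/

/-- The ballot number `T(n,k) = binom(n+k,k) − binom(n+k,k−1)`, with the
convention that `binom(n+k,k−1) = 0` when `k = 0`. -/
def ballot (n k : ℕ) : ℤ :=
  ((n + k).choose k : ℤ) - if k = 0 then 0 else ((n + k).choose (k - 1) : ℤ)

open Finset

theorem catalan_succ_eq_choose_sub_choose (n : ℕ) :
    (catalan (n + 1) : ℤ) = ((2 * n + 2).choose (n + 1) : ℤ) - (2 * n + 2).choose n := by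
  have hcat : ((n : ℤ) + 2) * catalan (n + 1) = (2 * n + 2).choose (n + 1) := by
    exact_mod_cast succ_mul_catalan_eq_centralBinom (n + 1)
  have hchoose : ((2 * n + 2).choose (n + 1) : ℤ) * (n + 1) = (2 * n + 2).choose n * (n + 2) := by
    have := Nat.choose_succ_right_eq (2 * n + 2) n
    rw [show 2 * n + 2 - n = n + 2 by omega] at this
    exact_mod_cast this
  refine mul_left_cancel₀ (show (n : ℤ) + 2 ≠ 0 by positivity) ?_
  linear_combination hcat - hchoose

theorem ballot_succ_succ (n k : ℕ) :
    ballot (n + 1) (k + 1) = ballot (n + 1) k + ballot n (k + 1) := by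
  rcases k with _ | k
  · simp [ballot, Nat.choose_succ_succ]
  · simp only [ballot, Nat.add_eq_zero_iff, one_ne_zero, and_false, if_false,
      Nat.add_sub_cancel, show n + 1 + (k + 1 + 1) = n + k + 2 + 1 by ring,
      show n + 1 + (k + 1) = n + k + 2 by ring, show n + (k + 1 + 1) = n + k + 2 by ring,
      Nat.choose_succ_succ (n + k + 2)]
    push_cast
    ring

theorem ballot_self (n : ℕ) : ballot n n = catalan n := by
  rcases n with _ | n
  · simp [ballot]
  · simp [ballot, catalan_succ_eq_choose_sub_choose, two_mul, add_add_add_comm]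

theorem ballot_self_succ (n : ℕ) : ballot n (n + 1) = 0 := by
  rw [ballot, if_neg n.succ_ne_zero, Nat.add_sub_cancel, ← add_assoc, ← two_mul,
    Nat.choose_symm_half n, sub_self]

theorem ballot_succ_self (n : ℕ) : ballot (n + 1) n = catalan (n + 1) := by
  simpa [ballot_self, ballot_self_succ] using (ballot_succ_succ n n).symm

def altChooseSum (m : ℕ) (x : ℕ → ℤ) : ℤ :=
  ∑ j ∈ range (m + 1), (-1) ^ j * ((m - j).choose j : ℤ) * x j

theorem altChooseSum_add_two (m : ℕ) (x : ℕ → ℤ) :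
    altChooseSum (m + 2) x = altChooseSum (m + 1) x - altChooseSum m (fun j => x (j + 1)) := by
  have pascal : ∀ j ∈ range (m + 1),
      (-1) ^ (j + 1) * ((m + 2 - (j + 1)).choose (j + 1) : ℤ) * x (j + 1)
        = (-1) ^ (j + 1) * ((m + 1 - (j + 1)).choose (j + 1) : ℤ) * x (j + 1)
          - (-1) ^ j * ((m - j).choose j : ℤ) * x (j + 1) := by
    intro j hj
    rw [show m + 2 - (j + 1) = m - j + 1 by grind, show m + 1 - (j + 1) = m - j by omega,
      Nat.choose_succ_succ']
    push_cast
    ring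
  simp only [altChooseSum]
  rw [sum_range_succ' _ (m + 2), sum_range_succ _ (m + 1), sum_congr rfl pascal, sum_sub_distrib,
    sum_range_succ' _ (m + 1)]
  simp only [Nat.reduceSubDiff, tsub_self, Nat.choose_zero_succ, Nat.cast_zero, mul_zero,
    zero_mul, add_zero, pow_zero, Nat.choose_zero_right, Nat.cast_one, mul_one, one_mul]
  ring

theorem ballot_add_eq_altChooseSum (n m : ℕ) :
    ballot (n + m) n = altChooseSum m (fun j => catalan (n + m - j)) := by
  induction m using Nat.twoStepInduction generalizing n with
  | zero => simp [altChooseSum, ballot_self]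
  | one => simp [altChooseSum, sum_range_succ, ballot_succ_self]
  | more m ih ih' =>
    have hsucc : ballot (n + (m + 2)) (n + 1)
        = ballot (n + (m + 2)) n + ballot (n + (m + 1)) (n + 1) :=
      ballot_succ_succ (n + m + 1) n
    have h1 := ih' (n + 1)
    have h0 := ih (n + 1)
    rw [show n + 1 + (m + 1) = n + (m + 2) by ring] at h1
    rw [show n + 1 + m = n + (m + 1) by ring] at h0
    simp only [altChooseSum_add_two, ← h1, hsucc, h0,
      show ∀ j, n + (m + 2) - (j + 1) = n + (m + 1) - j from fun j => by omega,
      add_sub_cancel_right]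

/-- For `0 ≤ b ≤ a`,
`T(a,b) = Σ_{j=0}^{a−b} (−1)^j · binom(a−b−j, j) · C_{a−j}` in ℤ
(where `binom(x,y) = 0` when `x < y`). -/
theorem ballot_eq_alternating_catalan_sum (a b : ℕ) (hb : b ≤ a) :
    ballot a b =
      ∑ j ∈ Finset.range (a - b + 1),
        (-1 : ℤ) ^ j * ((a - b - j).choose j : ℤ) * (catalan (a - j) : ℤ) := by
  obtain ⟨m, rfl⟩ := Nat.exists_eq_add_of_le hb
  rw [ballot_add_eq_altChooseSum, Nat.add_sub_cancel_left]
  rfl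
end

section
/- For integers k ≥ 1 and 0 ≤ j ≤ k−1, the set of binary words (of arbitrary length) that avoid 0^i 1^{k−i} for every i ∈ {0,1,…,k} and contain exactly j zeros is finite, and its cardinality is the ballot number T(k, j+1). -/
/-- The binary word `0^j 1^{k-j}` (here `false` plays the role of `0` and
`true` the role of `1`). -/
def pat (k j : ℕ) : List Bool := List.replicate j false ++ List.replicate (k - j) true

/-- `w` avoids (as a not necessarily contiguous subsequence) the word
`0^j 1^{k−j}` for every `j ∈ {0,…,k}`. -/
def AvoidsAll (k : ℕ) (w : List Bool) : Prop := ∀ j ≤ k, ¬ (pat k j).Sublist w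

open List

namespace AvoidAux

def S (k j : ℕ) : Set (List Bool) := {w | AvoidsAll k w ∧ w.count false = j}

lemma concat_sublist_concat {α : Type*} {l w : List α} {a : α} :
    l ++ [a] <+ w ++ [a] ↔ l <+ w := by
  rw [← List.reverse_sublist]
  simp [List.reverse_append, List.cons_sublist_cons, List.reverse_sublist]

lemma concat_sublist_concat_ne {α : Type*} {l w : List α} {a b : α} (h : a ≠ b) :
    l ++ [a] <+ w ++ [b] ↔ l ++ [a] <+ w := by
  constructor
  · intro hs
    rw [← List.reverse_sublist] at hs
    simp only [List.reverse_append, List.reverse_singleton, List.singleton_append] at hs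
    rcases List.sublist_cons_iff.mp hs with h1 | ⟨r, hr, _⟩
    · rw [← List.reverse_sublist]
      simpa [List.reverse_append] using h1
    · exact absurd (by simpa using congrArg (·.head?) hr) h
  · intro hs
    exact hs.trans (List.sublist_append_left w [b])

lemma pat_succ {k i : ℕ} (h : i ≤ k) : pat (k+1) i = pat k i ++ [true] := by
  unfold pat
  rw [show k + 1 - i = (k - i) + 1 by omega, List.replicate_succ', List.append_assoc]

lemma pat_self (k : ℕ) : pat k k = List.replicate k false := by
  simp [pat]

lemma pat_length {k i : ℕ} (h : i ≤ k) : (pat k i).length = k := by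
  simp [pat]; omega

lemma avoid_nil {k : ℕ} (hk : 1 ≤ k) : AvoidsAll k [] := by
  intro i hi hs
  have := List.sublist_nil.mp hs
  have := congrArg List.length this
  rw [pat_length hi] at this
  simp at this; omega

lemma avoid_concat_true (m : ℕ) (w : List Bool) :
    AvoidsAll (m+1) (w ++ [true]) ↔ AvoidsAll m w := by
  constructor
  · intro h i hi hs
    exact h i (le_trans hi (Nat.le_succ m))
      (by rw [pat_succ hi]; exact hs.append (List.Sublist.refl [true]))
  · intro h i hi hs
    rcases Nat.lt_or_ge i (m+1) with hlt | hge
    · have hi' : i ≤ m := Nat.lt_succ_iff.mp hlt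
      rw [pat_succ hi'] at hs
      exact h i hi' (concat_sublist_concat.mp hs)
    · have hieq : i = m + 1 := le_antisymm hi hge
      subst hieq
      rw [pat_self, List.replicate_succ'] at hs
      have h2 : List.replicate m false ++ [false] <+ w :=
        (concat_sublist_concat_ne (by simp)).mp hs
      have h3 : List.replicate m false <+ w :=
        List.Sublist.trans (List.sublist_append_left _ _) h2
      exact h m le_rfl (by rw [pat_self]; exact h3)

lemma avoid_concat_false (m : ℕ) (w : List Bool) (hc : w.count false < m) :
    AvoidsAll (m+1) (w ++ [false]) ↔ AvoidsAll (m+1) w := by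
  constructor
  · intro h i hi hs
    exact h i hi (hs.trans (List.sublist_append_left w [false]))
  · intro h i hi hs
    rcases Nat.lt_or_ge i (m+1) with hlt | hge
    · have hi' : i ≤ m := Nat.lt_succ_iff.mp hlt
      rw [pat_succ hi'] at hs
      have h2 := (concat_sublist_concat_ne (show (true:Bool) ≠ false by simp)).mp hs
      rw [← pat_succ hi'] at h2
      exact h i hi h2
    · have hieq : i = m + 1 := le_antisymm hi hge
      subst hieq
      rw [pat_self, List.replicate_succ'] at hs
      have h2 : List.replicate m false <+ w := concat_sublist_concat.mp hs
      have := List.replicate_sublist_iff.mp h2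
      omega

lemma S_zero (j : ℕ) : S 0 j = ∅ := by
  ext w
  simp only [S, Set.mem_setOf_eq, Set.mem_empty_iff_false, iff_false, not_and]
  intro h
  exact absurd (List.nil_sublist w) (by simpa [pat] using h 0 le_rfl)

lemma S_empty_of_ge {k j : ℕ} (h : k ≤ j) : S k j = ∅ := by
  ext w
  simp only [S, Set.mem_setOf_eq, Set.mem_empty_iff_false, iff_false, not_and]
  intro hA hc
  have : List.replicate k false <+ w :=
    List.replicate_sublist_iff.mpr (by omega)
  exact hA k le_rfl (by rw [pat_self]; exact this)

lemma S_decomp_zero (m : ℕ) :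
    S (m+1) 0 = insert [] ((· ++ [true]) '' S m 0) := by
  ext w
  simp only [S, Set.mem_setOf_eq, Set.mem_insert_iff, Set.mem_image]
  constructor
  · rintro ⟨hA, hc⟩
    rcases List.eq_nil_or_concat w with rfl | ⟨L, b, rfl⟩
    · exact Or.inl rfl
    · right
      rw [List.concat_eq_append] at *
      cases b
      · simp at hc
      · exact ⟨L, ⟨(avoid_concat_true m L).mp hA, by simpa using hc⟩, rfl⟩
  · rintro (rfl | ⟨w', ⟨hA, hc⟩, rfl⟩)
    · exact ⟨avoid_nil (Nat.succ_le_succ (Nat.zero_le m)), rfl⟩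
    · exact ⟨(avoid_concat_true m w').mpr hA, by simpa using hc⟩

lemma S_decomp_succ (m j : ℕ) (h : j + 1 ≤ m) :
    S (m+1) (j+1) = ((· ++ [false]) '' S (m+1) j) ∪ ((· ++ [true]) '' S m (j+1)) := by
  ext w
  simp only [S, Set.mem_setOf_eq, Set.mem_union, Set.mem_image]
  constructor
  · rintro ⟨hA, hc⟩
    rcases List.eq_nil_or_concat w with rfl | ⟨L, b, rfl⟩
    · simp at hc
    · rw [List.concat_eq_append] at *
      cases b
      · left
        have hc' : L.count false = j := by simpa using hc
        exact ⟨L, ⟨(avoid_concat_false m L (by omega)).mp hA, hc'⟩, rfl⟩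
      · right
        exact ⟨L, ⟨(avoid_concat_true m L).mp hA, by simpa using hc⟩, rfl⟩
  · rintro (⟨w', ⟨hA, hc⟩, rfl⟩ | ⟨w', ⟨hA, hc⟩, rfl⟩)
    · exact ⟨(avoid_concat_false m w' (by omega)).mpr hA, by simpa using hc⟩
    · exact ⟨(avoid_concat_true m w').mpr hA, by simpa using hc⟩

lemma ballot_one (k : ℕ) : ballot k 1 = k := by
  simp [ballot, Nat.choose_one_right]

lemma ballot_pascal (m j : ℕ) :
    ballot (m+1) (j+2) = ballot (m+1) (j+1) + ballot m (j+2) := by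
  have e1 : m + 1 + (j + 2) = (m + j + 2) + 1 := by ring
  have e2 : m + 1 + (j + 1) = m + j + 2 := by ring
  have e3 : m + (j + 2) = m + j + 2 := by ring
  have h1 : (m+j+2+1).choose (j+1+1) = (m+j+2).choose (j+1) + (m+j+2).choose (j+1+1) :=
    Nat.choose_succ_succ (m+j+2) (j+1)
  have h2 : (m+j+2+1).choose (j+0+1) = (m+j+2).choose j + (m+j+2).choose (j+0+1) :=
    Nat.choose_succ_succ (m+j+2) j
  simp only [ballot, if_neg (Nat.succ_ne_zero _), e1, e2, e3,
    show j + 2 - 1 = j + 1 by omega, show j + 1 - 1 = j by omega,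
    show j + 2 = j + 1 + 1 from rfl, show j + 1 = j + 0 + 1 from rfl] at h1 h2 ⊢
  rw [h1, h2]
  push_cast
  ring

lemma ballot_boundary (m : ℕ) : ballot m (m+1) = 0 := by
  have h := Nat.choose_symm (show m + 1 ≤ m + (m+1) by omega)
  rw [show m + (m+1) - (m+1) = m by omega] at h
  simp [ballot, show m + 1 - 1 = m by omega, ← h]

lemma concat_injective (b : Bool) : Function.Injective (· ++ [b] : List Bool → List Bool) :=
  fun _ _ h => List.append_cancel_right h

lemma main (k : ℕ) : ∀ j : ℕ, (S k j).Finite ∧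
    ((S k j).ncard : ℤ) = if j < k then ballot k (j+1) else 0 := by
  induction k with
  | zero =>
    intro j
    rw [S_zero]
    simp
  | succ m ih =>
    intro j
    induction j with
    | zero =>
      rw [S_decomp_zero]
      obtain ⟨hfin, hcard⟩ := ih 0
      have hni : ([] : List Bool) ∉ (· ++ [true]) '' S m 0 := by
        rintro ⟨w', _, hw⟩
        simpa using congrArg List.length hw
      have hfin' := hfin.image (· ++ [true])
      constructor
      · exact hfin'.insert []
      · rw [Set.ncard_insert_of_notMem hni hfin',
          Set.ncard_image_of_injective _ (concat_injective true)]
        rw [if_pos (Nat.succ_pos m)]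
        rcases Nat.eq_zero_or_pos m with rfl | hm
        · rw [S_zero] at hcard ⊢
          simp [ballot_one]
        · rw [if_pos hm] at hcard
          rw [ballot_one] at hcard ⊢
          push_cast
          omega
    | succ j ihj =>
      rcases Nat.lt_or_ge (j+1) (m+1) with hlt | hge
      · have hjm : j + 1 ≤ m := by omega
        rw [S_decomp_succ m j hjm]
        obtain ⟨hfin1, hcard1⟩ := ihj
        obtain ⟨hfin2, hcard2⟩ := ih (j+1)
        have hfin1' := hfin1.image (· ++ [false])
        have hfin2' := hfin2.image (· ++ [true])
        have hdisj : Disjoint ((· ++ [false]) '' S (m+1) j) ((· ++ [true]) '' S m (j+1)) := by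
          rw [Set.disjoint_left]
          rintro x ⟨w1, _, rfl⟩ ⟨w2, _, hw⟩
          have := congrArg List.reverse hw
          simp [List.reverse_append] at this
        constructor
        · exact hfin1'.union hfin2'
        · rw [Set.ncard_union_eq hdisj hfin1' hfin2',
            Set.ncard_image_of_injective _ (concat_injective false),
            Set.ncard_image_of_injective _ (concat_injective true)]
          rw [if_pos hlt]
          rw [if_pos (show j < m + 1 by omega)] at hcard1
          rw [ballot_pascal]
          simp only [show j+1+1 = j+2 from rfl] at hcard2 ⊢
          rcases Nat.lt_or_ge (j+1) m with hlt2 | hge2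
          · rw [if_pos hlt2] at hcard2
            push_cast
            omega
          · have : m = j + 1 := by omega
            subst this
            rw [if_neg (by omega)] at hcard2
            rw [ballot_boundary]
            push_cast
            omega
      · rw [S_empty_of_ge (by omega)]
        refine ⟨Set.finite_empty, ?_⟩
        rw [if_neg (by omega)]
        simp

end AvoidAux

/-- For `k ≥ 1` and `0 ≤ j ≤ k−1`, the set of binary words (of arbitrary
length) avoiding `0^i 1^{k−i}` for every `i ∈ {0,…,k}` and having exactly `j`
zeros is finite, of cardinality the ballot number `T(k, j+1)`. -/
theorem count_avoiding_words_with_j_zeros (k j : ℕ) (hk : 1 ≤ k) (hj : j ≤ k - 1) :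
    {w : List Bool | AvoidsAll k w ∧ w.count false = j}.Finite ∧
      ({w : List Bool | AvoidsAll k w ∧ w.count false = j}.ncard : ℤ) =
        ballot k (j + 1) := by
  obtain ⟨hfin, hcard⟩ := AvoidAux.main k j
  rw [if_pos (by omega)] at hcard
  exact ⟨hfin, hcard⟩
end
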